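/- arXiv:1508.03946 — 6 statements merged into one kernel-verified Lean document; each statement's English description precedes it below -/
import Mathlib

section
/- Let $f:(c_1,c_2)\cup(c_3,c_4)\to\mathbb{R}$ (with $-\infty\le c_1<c_2<c_3<c_4\le\infty$) be a positive continuous function such that $\int_{c_1}^{c_2}f$ and $\int_{c_3}^{c_4}f$ are finite. Let $A_1,\dots,A_k$ be pairwise disjoint subintervals of $(c_1,c_2)\cup(c_3,c_4)$. Then for every $\lambda\in(c_2,c_3)$, the $k\times k$ matrix with $(i,j)$-entry $\int_{A_i} f(s)/(\lambda-s)^{j-1}\,ds$ has nonzero determinant. -/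
open MeasureTheory

/-- Integral of a function positive on a nonempty open interval is positive. -/
lemma aux_integral_pos {a b : ℝ} (hab : a < b) {h : ℝ → ℝ}
    (hpos : ∀ s ∈ Set.Ioo a b, 0 < h s)
    (hint : IntegrableOn h (Set.Ioo a b)) :
    0 < ∫ s in Set.Ioo a b, h s := by
  rw [setIntegral_pos_iff_support_of_nonneg_ae
      (ae_restrict_of_forall_mem measurableSet_Ioo (fun s hs => (hpos s hs).le)) hint]
  have hsub : Set.Ioo a b ⊆ Function.support h ∩ Set.Ioo a b :=
    fun s hs => ⟨(hpos s hs).ne', hs⟩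
  calc (0 : ENNReal) < volume (Set.Ioo a b) := by
        rw [Real.volume_Ioo]; exact ENNReal.ofReal_pos.mpr (by linarith)
    _ ≤ volume (Function.support h ∩ Set.Ioo a b) := measure_mono hsub

/-- Let `f` be a positive continuous function on
`(c₁,c₂) ∪ (c₃,c₄)` (with `-∞ ≤ c₁ < c₂ < c₃ < c₄ ≤ ∞`), integrable on this domain.
If `A₁, …, A_k` are pairwise disjoint subintervals of the domain, then for every
`λ ∈ (c₂,c₃)` the `k×k` matrix with entries `∫_{A_i} f(s)/(λ-s)^{j-1} ds` has
nonzero determinant. -/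
theorem stmt_0 (c₁ c₄ : EReal) (c₂ c₃ : ℝ)
    (h12 : c₁ < (c₂ : EReal)) (h23 : c₂ < c₃) (h34 : (c₃ : EReal) < c₄)
    (D : Set ℝ)
    (hD : D = {s : ℝ | c₁ < (s : EReal) ∧ s < c₂} ∪ {s : ℝ | c₃ < s ∧ (s : EReal) < c₄})
    (f : ℝ → ℝ) (hf_cont : ContinuousOn f D) (hf_pos : ∀ s ∈ D, 0 < f s)
    (hf_int : IntegrableOn f D)
    (k : ℕ) (A : Fin k → Set ℝ)
    (hA_int : ∀ i, ∃ a b : ℝ, a < b ∧ A i = Set.Ioo a b)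
    (hA_sub : ∀ i, A i ⊆ D)
    (hA_disj : ∀ i j, i ≠ j → Disjoint (A i) (A j))
    (lam : ℝ) (hlam : lam ∈ Set.Ioo c₂ c₃) :
    Matrix.det (Matrix.of fun i j : Fin k =>
      ∫ s in A i, f s / (lam - s) ^ (j : ℕ)) ≠ 0 := by
  classical
  set g : ℝ → ℝ := fun s => (lam - s)⁻¹ with hg
  set δ : ℝ := min (lam - c₂) (c₃ - lam) with hδdef
  have hδ : 0 < δ := lt_min (by linarith [hlam.1]) (by linarith [hlam.2])
  have hlow : ∀ s ∈ D, δ ≤ |lam - s| := by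
    intro s hs
    rw [hD] at hs
    rcases hs with hs | hs
    · rw [abs_of_pos (by linarith [hs.2, hlam.1])]
      exact le_trans (min_le_left _ _) (by linarith [hs.2])
    · rw [abs_of_neg (by linarith [hs.1, hlam.2])]
      exact le_trans (min_le_right _ _) (by linarith [hs.1])
  have hne : ∀ s ∈ D, lam - s ≠ 0 := by
    intro s hs
    have h2 := lt_of_lt_of_le hδ (hlow s hs)
    intro h
    simp [h] at h2
  -- integrability of entries
  have hInt : ∀ (i : Fin k) (j : ℕ),
      IntegrableOn (fun s => f s * g s ^ j) (A i) := by
    intro i j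
    obtain ⟨a, b, hab, hAi⟩ := hA_int i
    have hfi : IntegrableOn f (A i) := hf_int.mono_set (hA_sub i)
    have hm : AEStronglyMeasurable (fun s => g s ^ j)
        (volume.restrict (A i)) :=
      (((measurable_const.sub measurable_id).inv.pow_const j)).aestronglyMeasurable
    have hbd : ∀ᵐ s ∂(volume.restrict (A i)), ‖g s ^ j‖ ≤ δ⁻¹ ^ j := by
      refine ae_restrict_of_forall_mem (by rw [hAi]; exact measurableSet_Ioo) ?_
      intro s hs
      have h1 : |g s| ≤ δ⁻¹ := by
        rw [hg]; simp only [abs_inv]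
        exact inv_anti₀ hδ (hlow s (hA_sub i hs))
      calc ‖g s ^ j‖ = |g s| ^ j := by rw [Real.norm_eq_abs, abs_pow]
        _ ≤ δ⁻¹ ^ j := pow_le_pow_left₀ (abs_nonneg _) h1 j
    exact (hfi.bdd_mul hm hbd).congr (Filter.Eventually.of_forall fun s => mul_comm _ _)
  intro hdet
  obtain ⟨c, hc, hMc⟩ := Matrix.exists_mulVec_eq_zero_iff.mpr hdet
  set q : ℝ → ℝ := fun s => ∑ j : Fin k, c j * g s ^ (j : ℕ) with hq
  have h1 : ∀ s, f s * q s = ∑ j : Fin k, c j * (f s * g s ^ (j : ℕ)) := by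
    intro s; rw [hq, Finset.mul_sum]; exact Finset.sum_congr rfl fun j _ => by ring
  -- each row gives ∫ f * q = 0
  have hrowint : ∀ i : Fin k, ∫ s in A i, f s * q s = 0 := by
    intro i
    have h2 : ∫ s in A i, f s * q s
        = ∑ j : Fin k, c j * ∫ s in A i, f s * g s ^ (j : ℕ) := by
      simp_rw [h1]
      rw [integral_finset_sum _ (fun (j : Fin k) _ => ((hInt i (j : ℕ)).const_mul (c j)))]
      exact Finset.sum_congr rfl fun j _ => MeasureTheory.integral_const_mul _ _
    have h3 : ∀ j : Fin k, (∫ s in A i, f s / (lam - s) ^ (j : ℕ))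
        = ∫ s in A i, f s * g s ^ (j : ℕ) := by
      intro j
      refine setIntegral_congr_fun ?_ (fun s hs => ?_)
      · obtain ⟨a, b, _, hAi⟩ := hA_int i; rw [hAi]; exact measurableSet_Ioo
      · rw [hg, div_eq_mul_inv, inv_pow]
    have h4 := congrFun hMc i
    simp only [Matrix.mulVec, Matrix.of_apply, dotProduct, Pi.zero_apply] at h4
    rw [h2, ← h4]
    exact Finset.sum_congr rfl fun j _ => by rw [← h3 j, mul_comm]
  -- find a root of q in each A i
  have hroot : ∀ i : Fin k, ∃ s ∈ A i, q s = 0 := by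
    intro i
    by_contra hno
    push_neg at hno
    obtain ⟨a, b, hab, hAi⟩ := hA_int i
    have hsubD : Set.Ioo a b ⊆ D := hAi ▸ hA_sub i
    have hno' : ∀ s ∈ Set.Ioo a b, q s ≠ 0 := fun s hs => hno s (hAi ▸ hs)
    have hrow : ∫ s in Set.Ioo a b, f s * q s = 0 := hAi ▸ hrowint i
    have hqcont : ContinuousOn q (Set.Ioo a b) := by
      refine continuousOn_finset_sum _ (fun j _ => ContinuousOn.mul continuousOn_const ?_)
      exact (ContinuousOn.inv₀ (continuousOn_const.sub continuousOn_id)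
        (fun s hs => hne s (hsubD hs))).pow _
    have hord : (Set.Ioo a b).OrdConnected := Set.ordConnected_Ioo
    have hmid : (a + b) / 2 ∈ Set.Ioo a b := by rw [Set.mem_Ioo]; constructor <;> linarith
    -- q has constant sign
    have hsign : (∀ s ∈ Set.Ioo a b, 0 < q s) ∨ (∀ s ∈ Set.Ioo a b, q s < 0) := by
      rcases (hno' _ hmid).lt_or_gt with h0 | h0
      · right
        intro s hs
        rcases (hno' s hs).lt_or_gt with h | h
        · exact h
        · exfalso
          have hsub : Set.uIcc s ((a+b)/2) ⊆ Set.Ioo a b := hord.uIcc_subset hs hmid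
          have h0m : (0:ℝ) ∈ Set.uIcc (q s) (q ((a+b)/2)) :=
            Set.mem_uIcc.mpr (Or.inr ⟨h0.le, h.le⟩)
          obtain ⟨t, ht, hqt⟩ := intermediate_value_uIcc (hqcont.mono hsub) h0m
          exact hno' t (hsub ht) hqt
      · left
        intro s hs
        rcases (hno' s hs).lt_or_gt with h | h
        · exfalso
          have hsub : Set.uIcc s ((a+b)/2) ⊆ Set.Ioo a b := hord.uIcc_subset hs hmid
          have h0m : (0:ℝ) ∈ Set.uIcc (q s) (q ((a+b)/2)) :=
            Set.mem_uIcc.mpr (Or.inl ⟨h.le, h0.le⟩)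
          obtain ⟨t, ht, hqt⟩ := intermediate_value_uIcc (hqcont.mono hsub) h0m
          exact hno' t (hsub ht) hqt
        · exact h
    have hfqint : IntegrableOn (fun s => f s * q s) (Set.Ioo a b) := by
      have heq : IntegrableOn (fun s => ∑ j : Fin k, c j * (f s * g s ^ (j : ℕ)))
          (Set.Ioo a b) := by
        have := integrable_finset_sum (μ := volume.restrict (Set.Ioo a b))
          (Finset.univ : Finset (Fin k))
          (fun j _ => ((hAi ▸ hInt i (j : ℕ)).const_mul (c j)))
        exact this
      exact heq.congr (Filter.Eventually.of_forall fun s => (h1 s).symm)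
    rcases hsign with hpos | hneg
    · have hlt : 0 < ∫ s in Set.Ioo a b, f s * q s :=
        aux_integral_pos hab
          (fun s hs => mul_pos (hf_pos s (hsubD hs)) (hpos s hs)) hfqint
      exact hlt.ne' hrow
    · have hlt : 0 < ∫ s in Set.Ioo a b, -(f s * q s) := by
        refine aux_integral_pos hab (fun s hs => ?_) hfqint.neg
        have := mul_pos (hf_pos s (hsubD hs)) (neg_pos.mpr (hneg s hs))
        nlinarith [hf_pos s (hsubD hs), hneg s hs]
      rw [integral_neg, hrow, neg_zero] at hlt
      exact hlt.false
  choose σ hσmem hσ using hroot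
  -- Vandermonde contradiction
  set x : Fin k → ℝ := fun i => g (σ i) with hx
  have hinj : Function.Injective x := by
    intro i j hij
    by_contra hne'
    have h5 : σ i = σ j := by
      have : lam - σ i = lam - σ j := by
        rw [hx] at hij
        simpa [hg] using inv_injective hij
      linarith
    exact (hA_disj i j hne').ne_of_mem (hσmem i) (hσmem j) h5
  have hv : (Matrix.vandermonde x).mulVec c = 0 := by
    funext i
    simp only [Matrix.mulVec, dotProduct, Matrix.vandermonde_apply, Pi.zero_apply]
    rw [← hσ i, hq]
    exact Finset.sum_congr rfl fun j _ => mul_comm _ _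
  have hvd : (Matrix.vandermonde x).det ≠ 0 := Matrix.det_vandermonde_ne_zero_iff.mpr hinj
  exact hc (Matrix.eq_zero_of_mulVec_eq_zero hvd hv)
end

section
/- Let $a,l\in\mathbb{R}$ with $a^2+l^2>0$. Then $\int_{-1}^{1}|as+l|^{-1/2}\,ds < 100/(a^2+l^2)^{1/4}$. -/
/-!
If `2|a| ≤ |l|`, then `|as + l| ≥ |l| - |a| ≥ |l|/2` on `[-1, 1]` and the integrand is bounded.
Otherwise `a ≠ 0`, and the substitution `t = as + l` bounds the integral by
`|a|⁻¹ ∫_{-R}^{R} |t|^{-1/2} dt = 4√R / |a|` with `R = |a| + |l| < 3|a|`.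
In both cases this is `O((a² + l²)^{-1/4})`, with a constant far below `100`.
-/

open MeasureTheory Set
open scoped ENNReal

theorem lintegral_Icc_zero_ofReal_rpow {r R : ℝ} (hr : -1 < r) (hR : 0 ≤ R) :
    ∫⁻ t in Icc 0 R, ENNReal.ofReal t ^ r = ENNReal.ofReal (R ^ (r + 1) / (r + 1)) := by
  have hint : IntegrableOn (fun t : ℝ => t ^ r) (Ioc 0 R) :=
    (intervalIntegrable_iff_integrableOn_Ioc_of_le hR).1
      (intervalIntegral.intervalIntegrable_rpow' hr)
  rw [← setLIntegral_congr Ioc_ae_eq_Icc,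
    setLIntegral_congr_fun measurableSet_Ioc fun t ht => ENNReal.ofReal_rpow_of_pos ht.1,
    ← ofReal_integral_eq_lintegral_ofReal hint
      ((ae_restrict_mem measurableSet_Ioc).mono fun t ht => Real.rpow_nonneg ht.1.le r),
    ← intervalIntegral.integral_of_le hR, integral_rpow (Or.inl hr),
    Real.zero_rpow (by linarith), sub_zero]

theorem lintegral_Icc_ofReal_abs_rpow_le {r R : ℝ} (hr : -1 < r) (hR : 0 ≤ R) :
    ∫⁻ t in Icc (-R) R, ENNReal.ofReal |t| ^ r
      ≤ ENNReal.ofReal (2 * (R ^ (r + 1) / (r + 1))) := by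
  have hneg : ∫⁻ t in Icc (-R) 0, ENNReal.ofReal |t| ^ r
      = ∫⁻ t in Icc 0 R, ENNReal.ofReal |t| ^ r := by
    have := (Measure.measurePreserving_neg (volume : Measure ℝ)).setLIntegral_comp_preimage_emb
      (Homeomorph.neg ℝ).measurableEmbedding (fun t => ENNReal.ofReal |t| ^ r) (Icc 0 R)
    simpa [abs_neg] using this
  have hpos : ∫⁻ t in Icc 0 R, ENNReal.ofReal |t| ^ r
      = ENNReal.ofReal (R ^ (r + 1) / (r + 1)) := by
    rw [← lintegral_Icc_zero_ofReal_rpow hr hR]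
    exact setLIntegral_congr_fun measurableSet_Icc fun t ht => by rw [abs_of_nonneg ht.1]
  have hnonneg : 0 ≤ R ^ (r + 1) / (r + 1) := div_nonneg (Real.rpow_nonneg hR _) (by linarith)
  calc ∫⁻ t in Icc (-R) R, ENNReal.ofReal |t| ^ r
      ≤ (∫⁻ t in Icc (-R) 0, ENNReal.ofReal |t| ^ r) + ∫⁻ t in Icc 0 R, ENNReal.ofReal |t| ^ r := by
        rw [← Icc_union_Icc_eq_Icc (by linarith) hR]
        exact lintegral_union_le _ _ _
    _ = ENNReal.ofReal (2 * (R ^ (r + 1) / (r + 1))) := by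
        rw [hneg, hpos, ← ENNReal.ofReal_add hnonneg hnonneg, two_mul]

theorem lintegral_comp_mul_add (f : ℝ → ℝ≥0∞) {a : ℝ} (ha : a ≠ 0) (b : ℝ) :
    ∫⁻ s, f (a * s + b) = ENNReal.ofReal |a⁻¹| * ∫⁻ t, f t := by
  have h := (Homeomorph.mulLeft₀ a ha).measurableEmbedding.lintegral_map (μ := volume)
    (fun t => f (t + b))
  rw [Homeomorph.coe_mulLeft₀, Real.map_volume_mul_left ha, lintegral_smul_measure,
    lintegral_add_right_eq_self f b] at h
  exact h.symm

theorem setLIntegral_Icc_ofReal_abs_mul_add_rpow_le {r a : ℝ} (hr : -1 < r) (ha : a ≠ 0) (l : ℝ) :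
    ∫⁻ s in Icc (-1) 1, ENNReal.ofReal |a * s + l| ^ r
      ≤ ENNReal.ofReal (|a|⁻¹ * (2 * ((|a| + |l|) ^ (r + 1) / (r + 1)))) := by
  set R := |a| + |l|
  set g := (Icc (-R) R).indicator fun t => ENNReal.ofReal |t| ^ r
  have hmem : ∀ s ∈ Icc (-1 : ℝ) 1, a * s + l ∈ Icc (-R) R := by
    intro s hs
    have has : |a * s| ≤ |a| := by
      rw [abs_mul]; exact mul_le_of_le_one_right (abs_nonneg a) (abs_le.2 hs)
    exact abs_le.1 ((abs_add_le _ _).trans (add_le_add_left has _))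
  calc ∫⁻ s in Icc (-1) 1, ENNReal.ofReal |a * s + l| ^ r
      = ∫⁻ s in Icc (-1) 1, g (a * s + l) :=
        setLIntegral_congr_fun measurableSet_Icc fun s hs => by
          simp only [g, indicator_of_mem (hmem s hs)]
    _ ≤ ∫⁻ s, g (a * s + l) := setLIntegral_le_lintegral _ _
    _ = ENNReal.ofReal |a⁻¹| * ∫⁻ t in Icc (-R) R, ENNReal.ofReal |t| ^ r := by
        rw [lintegral_comp_mul_add g ha, lintegral_indicator measurableSet_Icc]
    _ ≤ ENNReal.ofReal |a⁻¹| * ENNReal.ofReal (2 * (R ^ (r + 1) / (r + 1))) := by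
        gcongr
        exact lintegral_Icc_ofReal_abs_rpow_le hr (by positivity)
    _ = _ := by rw [← ENNReal.ofReal_mul (abs_nonneg _), abs_inv]

theorem setLIntegral_Icc_ofReal_abs_mul_add_rpow_le_of_abs_lt {r a l : ℝ} (hr : r ≤ 0)
    (hal : |a| < |l|) :
    ∫⁻ s in Icc (-1) 1, ENNReal.ofReal |a * s + l| ^ r ≤ ENNReal.ofReal (2 * (|l| - |a|) ^ r) := by
  have hpos : 0 < |l| - |a| := sub_pos.2 hal
  have hbound : ∀ s ∈ Icc (-1 : ℝ) 1,
      ENNReal.ofReal |a * s + l| ^ r ≤ ENNReal.ofReal ((|l| - |a|) ^ r) := by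
    intro s hs
    have has : |a * s| ≤ |a| := by
      rw [abs_mul]; exact mul_le_of_le_one_right (abs_nonneg a) (abs_le.2 hs)
    have hle : |l| - |a| ≤ |a * s + l| := by
      have := abs_sub_abs_le_abs_sub l (-(a * s))
      rw [abs_neg, sub_neg_eq_add, add_comm] at this
      linarith
    rw [ENNReal.ofReal_rpow_of_pos (hpos.trans_le hle)]
    exact ENNReal.ofReal_le_ofReal (Real.rpow_le_rpow_of_nonpos hpos hle hr)
  calc ∫⁻ s in Icc (-1) 1, ENNReal.ofReal |a * s + l| ^ r
      ≤ ∫⁻ _ in Icc (-1 : ℝ) 1, ENNReal.ofReal ((|l| - |a|) ^ r) :=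
        setLIntegral_mono measurable_const hbound
    _ = ENNReal.ofReal (2 * (|l| - |a|) ^ r) := by
        rw [setLIntegral_const, Real.volume_Icc, ← ENNReal.ofReal_mul (by positivity), mul_comm]
        norm_num

theorem lt_div_rpow_quarter_of_sq_mul_sqrt_lt {u c x : ℝ} (hu : 0 ≤ u) (hc : 0 ≤ c) (hx : 0 < x)
    (h : u ^ 2 * √x < c ^ 2) : u < c / x ^ (1 / 4 : ℝ) := by
  have hsq : (x ^ (1 / 4 : ℝ)) ^ 2 = √x := by
    rw [← Real.rpow_natCast, ← Real.rpow_mul hx.le, Real.sqrt_eq_rpow]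
    norm_num
  rw [lt_div_iff₀ (Real.rpow_pos_of_pos hx _),
    ← pow_lt_pow_iff_left₀ (by positivity) hc two_ne_zero, mul_pow, hsq]
  exact h

theorem sqrt_sq_add_sq_le_abs_add_abs (a b : ℝ) : √(a ^ 2 + b ^ 2) ≤ |a| + |b| := by
  rw [Real.sqrt_le_left (by positivity), add_sq, sq_abs, sq_abs]
  nlinarith [abs_nonneg a, abs_nonneg b]

theorem two_mul_rpow_neg_half_lt_of_two_mul_abs_le {a l : ℝ} (hl : 0 < |l|) (hal : 2 * |a| ≤ |l|) :
    2 * (|l| - |a|) ^ (-(1 / 2) : ℝ) < 100 / (a ^ 2 + l ^ 2) ^ (1 / 4 : ℝ) := by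
  have hy : 0 < |l| - |a| := by linarith [abs_nonneg a]
  apply lt_div_rpow_quarter_of_sq_mul_sqrt_lt (by positivity) (by norm_num)
    (by nlinarith [sq_abs l, sq_nonneg a])
  have hsq : ((|l| - |a|) ^ (-(1 / 2) : ℝ)) ^ 2 = (|l| - |a|)⁻¹ := by
    rw [← Real.rpow_natCast, ← Real.rpow_mul hy.le]
    norm_num [Real.rpow_neg_one]
  calc (2 * (|l| - |a|) ^ (-(1 / 2) : ℝ)) ^ 2 * √(a ^ 2 + l ^ 2)
      ≤ 4 * (|a| + |l|) / (|l| - |a|) := by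
        rw [mul_pow, hsq, div_eq_mul_inv, mul_right_comm]
        gcongr
        · norm_num
        · exact sqrt_sq_add_sq_le_abs_add_abs a l
    _ < 100 ^ 2 := by
        rw [div_lt_iff₀ hy]
        linarith [abs_nonneg a]

theorem four_mul_sqrt_div_lt_of_abs_lt_two_mul {a l : ℝ} (ha : a ≠ 0) (hla : |l| < 2 * |a|) :
    4 * √(|a| + |l|) / |a| < 100 / (a ^ 2 + l ^ 2) ^ (1 / 4 : ℝ) := by
  have ha' : 0 < |a| := abs_pos.2 ha
  apply lt_div_rpow_quarter_of_sq_mul_sqrt_lt (by positivity) (by norm_num) (by positivity)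
  calc (4 * √(|a| + |l|) / |a|) ^ 2 * √(a ^ 2 + l ^ 2)
      ≤ 16 * (|a| + |l|) * (|a| + |l|) / |a| ^ 2 := by
        rw [div_pow, mul_pow, Real.sq_sqrt (by positivity), div_mul_eq_mul_div]
        gcongr
        · norm_num
        · exact sqrt_sq_add_sq_le_abs_add_abs a l
    _ < 100 ^ 2 := by
        rw [div_lt_iff₀ (by positivity)]
        nlinarith [abs_nonneg l]

/-- For `a, l ∈ ℝ` with `a² + l² > 0`,
`∫_{-1}^{1} |as + l|^{-1/2} ds < 100 / (a² + l²)^{1/4}` (Lebesgue integral, the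
integrand being `+∞` where `as + l = 0`). -/
theorem stmt_2 (a l : ℝ) (h : 0 < a ^ 2 + l ^ 2) :
    ∫⁻ s in Set.Icc (-1 : ℝ) 1, (ENNReal.ofReal |a * s + l|) ^ (-(1 / 2 : ℝ)) <
      ENNReal.ofReal (100 / (a ^ 2 + l ^ 2) ^ ((1 : ℝ) / 4)) := by
  have hbound : 0 < 100 / (a ^ 2 + l ^ 2) ^ ((1 : ℝ) / 4) := by positivity
  rcases le_or_gt (2 * |a|) |l| with hal | hla
  · have hl : 0 < |l| := by
      refine abs_pos.2 fun hl0 => h.ne' ?_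
      rw [hl0, abs_zero] at hal
      have ha0 : a = 0 := abs_eq_zero.1 (by linarith [abs_nonneg a])
      simp [ha0, hl0]
    calc _ ≤ ENNReal.ofReal (2 * (|l| - |a|) ^ (-(1 / 2) : ℝ)) :=
          setLIntegral_Icc_ofReal_abs_mul_add_rpow_le_of_abs_lt (by norm_num) (by linarith)
      _ < _ := (ENNReal.ofReal_lt_ofReal_iff hbound).2
          (two_mul_rpow_neg_half_lt_of_two_mul_abs_le hl hal)
  · have ha : a ≠ 0 := by
      rintro rfl
      rw [abs_zero, mul_zero] at hla
      exact (abs_nonneg l).not_gt hla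
    calc _ ≤ ENNReal.ofReal (|a|⁻¹ * (2 * ((|a| + |l|) ^ (-(1 / 2) + 1 : ℝ) / (-(1 / 2) + 1)))) :=
          setLIntegral_Icc_ofReal_abs_mul_add_rpow_le (by norm_num) ha l
      _ = ENNReal.ofReal (4 * √(|a| + |l|) / |a|) := by
          congr 1
          rw [Real.sqrt_eq_rpow]
          norm_num
          ring
      _ < _ := (ENNReal.ofReal_lt_ofReal_iff hbound).2
          (four_mul_sqrt_div_lt_of_abs_lt_two_mul ha hla)
end

section
/- Let $X=ASL_2(\mathbb{R})/ASL_2(\mathbb{Z})$ and define $\alpha_0:X\to[2^{-1/2},\infty)$ by $\alpha_0((h,\xi)\Gamma)=\sup_{w\in\mathbb{Z}^2\setminus\{0\}}\|hw\|^{-1/2}$. Then for every $t\ge20$ and every $x\in X$, $\int_{-1}^{1}\alpha_0(a_t u(s)x)\,ds < \frac14\alpha_0(x) + 2e^t$, where $a_t u(s)$ acts by left multiplication via $(h,\xi)\mapsto(a_tu(s)h, a_tu(s)\xi)$. -/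
/-! If `α₀(h) ≤ e^{t/2}/2`: for `|s| ≤ 1` the matrix `aₜu(s)` shrinks no vector by more than a
factor `2eᵗ`, so the integrand is at most `(2eᵗ)^{1/2} α₀(h) ≤ eᵗ/√2`.

Otherwise the lattice `hℤ²` contains a primitive vector `b` with `‖b‖ < 4e⁻ᵗ`, hence
`‖aₜu(s)b‖ ≤ 8`. The lattice is unimodular, so every lattice vector `v` not parallel to `b` has
`‖aₜu(s)v‖ ‖aₜu(s)b‖ ≥ 1`; this gives
`α₀(aₜu(s)h) ≤ ‖aₜu(s)b‖^{-1/2} + 3 ≤ e^{-t/2}|b₀ + s b₁|^{-1/2} + 3`. Integrated over `[-1,1]`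
this is at most `12 e^{-t/2} ‖b‖^{-1/2} + 6 ≤ 12 e^{-t/2} α₀(h) + 6`, and `e^{t/2} ≥ 48`. -/

open Matrix MeasureTheory

/-- The Euclidean norm on `ℝ²` (viewed as `Fin 2 → ℝ`). -/
noncomputable def enorm2 (v : Fin 2 → ℝ) : ℝ :=
  Real.sqrt (v 0 ^ 2 + v 1 ^ 2)

/-- The height function `α₀` on the space of affine lattices: for `x = (h,ξ)Γ`,
`α₀(x) = sup_{w ∈ ℤ²∖{0}} ‖hw‖^{-1/2}` (it depends only on the lattice `hℤ²`). -/
noncomputable def alpha0 (h : Matrix (Fin 2) (Fin 2) ℝ) : ℝ :=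
  ⨆ w : {w : Fin 2 → ℤ // w ≠ 0},
    enorm2 (h.mulVec fun i => ((w.1 i : ℝ))) ^ (-(1 / 2 : ℝ))

open Set

lemma enorm2_nonneg (x : Fin 2 → ℝ) : 0 ≤ enorm2 x := Real.sqrt_nonneg _

lemma sq_enorm2 (x : Fin 2 → ℝ) : enorm2 x ^ 2 = x 0 ^ 2 + x 1 ^ 2 :=
  Real.sq_sqrt (by positivity)

lemma enorm2_pos {x : Fin 2 → ℝ} (hx : x ≠ 0) : 0 < enorm2 x := by
  refine Real.sqrt_pos.2 ?_
  by_contra! h0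
  apply hx
  ext i
  fin_cases i <;> simp only [Fin.zero_eta, Fin.mk_one, Pi.zero_apply] <;>
    nlinarith [sq_nonneg (x 0), sq_nonneg (x 1)]

lemma enorm2_smul (c : ℝ) (x : Fin 2 → ℝ) : enorm2 (c • x) = |c| * enorm2 x := by
  simp only [enorm2, Pi.smul_apply, smul_eq_mul]
  rw [← Real.sqrt_sq_eq_abs, ← Real.sqrt_mul (sq_nonneg c)]
  ring_nf

lemma abs_apply_zero_le_enorm2 (x : Fin 2 → ℝ) : |x 0| ≤ enorm2 x := by
  rw [← Real.sqrt_sq_eq_abs]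
  exact Real.sqrt_le_sqrt (by nlinarith [sq_nonneg (x 1)])

lemma enorm2_le_abs_add_abs (x : Fin 2 → ℝ) : enorm2 x ≤ |x 0| + |x 1| := by
  refine Real.sqrt_le_iff.2 ⟨by positivity, ?_⟩
  nlinarith [sq_abs (x 0), sq_abs (x 1), mul_nonneg (abs_nonneg (x 0)) (abs_nonneg (x 1))]

lemma abs_cross_le (x y : Fin 2 → ℝ) : |x 0 * y 1 - x 1 * y 0| ≤ enorm2 x * enorm2 y := by
  rw [enorm2, enorm2, ← Real.sqrt_mul (by positivity), ← Real.sqrt_sq_eq_abs]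
  exact Real.sqrt_le_sqrt (by nlinarith [sq_nonneg (x 0 * y 0 + x 1 * y 1)])

lemma one_le_enorm2_intCast {w : Fin 2 → ℤ} (hw : w ≠ 0) : 1 ≤ enorm2 fun i => (w i : ℝ) := by
  obtain ⟨i, hi⟩ := Function.ne_iff.1 hw
  have hi' : (1 : ℝ) ≤ (w i : ℝ) ^ 2 := by
    rw [one_le_sq_iff_one_le_abs]
    exact_mod_cast Int.one_le_abs hi
  have hsum : (w i : ℝ) ^ 2 ≤ (w 0 : ℝ) ^ 2 + (w 1 : ℝ) ^ 2 := by
    fin_cases i <;> simp [sq_nonneg]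
  rw [← Real.sqrt_one]
  exact Real.sqrt_le_sqrt (hi'.trans hsum)

lemma mulVec_apply_fin_two (A : Matrix (Fin 2) (Fin 2) ℝ) (x : Fin 2 → ℝ) (i : Fin 2) :
    (A *ᵥ x) i = A i 0 * x 0 + A i 1 * x 1 := by
  simp [Matrix.mulVec, dotProduct, Fin.sum_univ_two]

lemma enorm2_mulVec_le {A : Matrix (Fin 2) (Fin 2) ℝ} {c : ℝ} (hA : ∀ i j, |A i j| ≤ c)
    (x : Fin 2 → ℝ) : enorm2 (A *ᵥ x) ≤ 2 * c * enorm2 x := by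
  have hc : 0 ≤ c := (abs_nonneg _).trans (hA 0 0)
  have hrow : ∀ i, (A *ᵥ x) i ^ 2 ≤ 2 * c ^ 2 * enorm2 x ^ 2 := fun i => by
    have hsq : ∀ j, A i j ^ 2 ≤ c ^ 2 := fun j => by
      rw [← sq_abs]; exact pow_le_pow_left₀ (abs_nonneg _) (hA i j) 2
    rw [mulVec_apply_fin_two, sq_enorm2]
    nlinarith [sq_nonneg (A i 0 * x 1 - A i 1 * x 0), hsq 0, hsq 1,
      mul_le_mul_of_nonneg_right (add_le_add (hsq 0) (hsq 1))
        (add_nonneg (sq_nonneg (x 0)) (sq_nonneg (x 1)))]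
  refine Real.sqrt_le_iff.2 ⟨mul_nonneg (by linarith) (enorm2_nonneg x), ?_⟩
  nlinarith [hrow 0, hrow 1]

lemma enorm2_le_mulVec {A : Matrix (Fin 2) (Fin 2) ℝ} {c : ℝ} (hdet : A.det = 1)
    (hA : ∀ i j, |A i j| ≤ c) (x : Fin 2 → ℝ) : enorm2 x ≤ 2 * c * enorm2 (A *ᵥ x) := by
  have hadj : ∀ i j, |A.adjugate i j| ≤ c := by
    intro i j
    fin_cases i <;> fin_cases j <;> simp [Matrix.adjugate_fin_two, hA]
  calc enorm2 x = enorm2 (A.adjugate *ᵥ (A *ᵥ x)) := by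
        rw [Matrix.mulVec_mulVec, Matrix.adjugate_mul, hdet, one_smul, Matrix.one_mulVec]
    _ ≤ 2 * c * enorm2 (A *ᵥ x) := enorm2_mulVec_le hadj _

lemma cross_mulVec (A : Matrix (Fin 2) (Fin 2) ℝ) (x y : Fin 2 → ℝ) :
    (A *ᵥ x) 0 * (A *ᵥ y) 1 - (A *ᵥ x) 1 * (A *ᵥ y) 0 = A.det * (x 0 * y 1 - x 1 * y 0) := by
  simp only [mulVec_apply_fin_two, Matrix.det_fin_two]
  ring

lemma rpow_neg_half_le_sqrt_mul {r y c : ℝ} (hr : 0 < r) (hc : 0 < c) (h : r ≤ c * y) :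
    y ^ (-(1 / 2 : ℝ)) ≤ √c * r ^ (-(1 / 2 : ℝ)) := by
  have hy : 0 < y := pos_of_mul_pos_right (hr.trans_le h) hc.le
  rw [Real.rpow_neg hy.le, Real.rpow_neg hr.le, ← Real.sqrt_eq_rpow, ← Real.sqrt_eq_rpow,
    ← div_eq_mul_inv, le_div_iff₀ (Real.sqrt_pos.2 hr), inv_mul_le_iff₀ (Real.sqrt_pos.2 hy),
    ← Real.sqrt_mul hy.le]
  exact Real.sqrt_le_sqrt (by linarith [mul_comm c y])

lemma sq_mul_lt_one_of_lt_rpow_neg_half {c y : ℝ} (hc : 0 < c) (h : c < y ^ (-(1 / 2 : ℝ))) :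
    c ^ 2 * y < 1 := by
  by_contra! h1
  have := rpow_neg_half_le_sqrt_mul one_pos (by positivity) h1
  rw [Real.one_rpow, mul_one, Real.sqrt_sq hc.le] at this
  linarith

section Lattice

variable {g : Matrix (Fin 2) (Fin 2) ℝ}

lemma exists_pos_le_enorm2_mulVec_intCast (hdet : g.det = 1) :
    ∃ δ > 0, ∀ w : Fin 2 → ℤ, w ≠ 0 → δ ≤ enorm2 (g *ᵥ fun i => (w i : ℝ)) := by
  obtain ⟨c, hc⟩ := (Set.finite_range fun p : Fin 2 × Fin 2 => |g p.1 p.2|).bddAbove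
  have hgc : ∀ i j, |g i j| ≤ c := fun i j => hc ⟨(i, j), rfl⟩
  have hc0 : 0 ≤ c := (abs_nonneg _).trans (hgc 0 0)
  refine ⟨(2 * c + 1)⁻¹, by positivity, fun w hw => ?_⟩
  rw [inv_le_iff_one_le_mul₀' (by positivity)]
  calc (1 : ℝ) ≤ enorm2 fun i => (w i : ℝ) := one_le_enorm2_intCast hw
    _ ≤ 2 * c * enorm2 (g *ᵥ fun i => (w i : ℝ)) := enorm2_le_mulVec hdet hgc _
    _ ≤ (2 * c + 1) * enorm2 (g *ᵥ fun i => (w i : ℝ)) := by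
        gcongr
        · exact enorm2_nonneg _
        · linarith

lemma enorm2_mulVec_intCast_pos (hdet : g.det = 1) {w : Fin 2 → ℤ} (hw : w ≠ 0) :
    0 < enorm2 (g *ᵥ fun i => (w i : ℝ)) := by
  obtain ⟨δ, hδ, hle⟩ := exists_pos_le_enorm2_mulVec_intCast hdet
  exact hδ.trans_le (hle w hw)

lemma enorm2_mulVec_intCast_smul (g : Matrix (Fin 2) (Fin 2) ℝ) (k : ℤ) (u : Fin 2 → ℤ) :
    enorm2 (g *ᵥ fun i => ((k • u) i : ℝ)) = |(k : ℝ)| * enorm2 (g *ᵥ fun i => (u i : ℝ)) := by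
  rw [show (fun i => ((k • u) i : ℝ)) = (k : ℝ) • fun i => (u i : ℝ) by ext; simp,
    Matrix.mulVec_smul, enorm2_smul]

lemma one_le_enorm2_mulVec_mul_enorm2_mulVec (hdet : g.det = 1) {w u : Fin 2 → ℤ}
    (hwu : w 0 * u 1 - w 1 * u 0 ≠ 0) :
    1 ≤ enorm2 (g *ᵥ fun i => (w i : ℝ)) * enorm2 (g *ᵥ fun i => (u i : ℝ)) := by
  calc (1 : ℝ) ≤ |((w 0 * u 1 - w 1 * u 0 : ℤ) : ℝ)| := by exact_mod_cast Int.one_le_abs hwu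
    _ = |(g *ᵥ fun i => (w i : ℝ)) 0 * (g *ᵥ fun i => (u i : ℝ)) 1
          - (g *ᵥ fun i => (w i : ℝ)) 1 * (g *ᵥ fun i => (u i : ℝ)) 0| := by
        rw [cross_mulVec, hdet, one_mul]
        push_cast
        rfl
    _ ≤ _ := abs_cross_le _ _

end Lattice

lemma ne_zero_of_isCoprime {u : Fin 2 → ℤ} (hu : IsCoprime (u 0) (u 1)) : u ≠ 0 := by
  rintro rfl
  exact not_isCoprime_zero_zero hu

lemma exists_isCoprime_smul_eq {v : Fin 2 → ℤ} (hv : v ≠ 0) :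
    ∃ (k : ℕ) (u : Fin 2 → ℤ), 0 < k ∧ IsCoprime (u 0) (u 1) ∧ v = (k : ℤ) • u := by
  have hgcd : 0 < (v 0).gcd (v 1) := by
    rw [Nat.pos_iff_ne_zero, Ne, Int.gcd_eq_zero_iff]
    contrapose! hv
    ext i
    fin_cases i <;> simp [hv]
  obtain ⟨k, a, b, hk, hab, ha, hb⟩ := Int.exists_gcd_one' hgcd
  refine ⟨k, ![a, b], hk, Int.isCoprime_iff_gcd_eq_one.2 hab, ?_⟩
  ext i
  fin_cases i <;> simp [ha, hb, mul_comm]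

lemma exists_eq_smul_of_cross_eq_zero {u w : Fin 2 → ℤ} (hu : IsCoprime (u 0) (u 1))
    (hwu : w 0 * u 1 - w 1 * u 0 = 0) : ∃ k : ℤ, w = k • u := by
  obtain ⟨a, b, hab⟩ := hu
  refine ⟨a * w 0 + b * w 1, ?_⟩
  ext i
  fin_cases i
  · show w 0 = (a * w 0 + b * w 1) * u 0
    linear_combination (-w 0) * hab + b * hwu
  · show w 1 = (a * w 0 + b * w 1) * u 1
    linear_combination (-w 1) * hab - a * hwu

instance : Nonempty {w : Fin 2 → ℤ // w ≠ 0} := ⟨⟨1, one_ne_zero⟩⟩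

section Alpha0

variable {g : Matrix (Fin 2) (Fin 2) ℝ}

lemma alpha0_nonneg (g : Matrix (Fin 2) (Fin 2) ℝ) : 0 ≤ alpha0 g :=
  Real.iSup_nonneg fun _ => Real.rpow_nonneg (enorm2_nonneg _) _

lemma bddAbove_range_alpha0 (hdet : g.det = 1) :
    BddAbove (Set.range fun w : {w : Fin 2 → ℤ // w ≠ 0} =>
      enorm2 (g *ᵥ fun i => (w.1 i : ℝ)) ^ (-(1 / 2 : ℝ))) := by
  obtain ⟨δ, hδ, hle⟩ := exists_pos_le_enorm2_mulVec_intCast hdet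
  refine ⟨δ ^ (-(1 / 2 : ℝ)), ?_⟩
  rintro _ ⟨w, rfl⟩
  exact Real.rpow_le_rpow_of_nonpos hδ (hle w.1 w.2) (by norm_num)

lemma rpow_le_alpha0 (hdet : g.det = 1) {w : Fin 2 → ℤ} (hw : w ≠ 0) :
    enorm2 (g *ᵥ fun i => (w i : ℝ)) ^ (-(1 / 2 : ℝ)) ≤ alpha0 g :=
  le_ciSup (bddAbove_range_alpha0 hdet) ⟨w, hw⟩

lemma alpha0_le {C : ℝ}
    (hC : ∀ w : Fin 2 → ℤ, w ≠ 0 → enorm2 (g *ᵥ fun i => (w i : ℝ)) ^ (-(1 / 2 : ℝ)) ≤ C) :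
    alpha0 g ≤ C :=
  ciSup_le fun w => hC w.1 w.2

lemma alpha0_mul_le {A : Matrix (Fin 2) (Fin 2) ℝ} {c : ℝ} (hc : 0 < c)
    (hA : ∀ x, enorm2 x ≤ c * enorm2 (A *ᵥ x)) (hdet : g.det = 1) :
    alpha0 (A * g) ≤ √c * alpha0 g :=
  alpha0_le fun w hw => by
    rw [← Matrix.mulVec_mulVec]
    refine (rpow_neg_half_le_sqrt_mul (enorm2_mulVec_intCast_pos hdet hw) hc (hA _)).trans ?_
    gcongr
    exact rpow_le_alpha0 hdet hw

lemma exists_isCoprime_lt_rpow_of_lt_alpha0 (hdet : g.det = 1) {c : ℝ} (hc : c < alpha0 g) :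
    ∃ u : Fin 2 → ℤ, IsCoprime (u 0) (u 1) ∧
      c < enorm2 (g *ᵥ fun i => (u i : ℝ)) ^ (-(1 / 2 : ℝ)) := by
  obtain ⟨⟨v, hv⟩, hcv⟩ := exists_lt_of_lt_ciSup hc
  obtain ⟨k, u, hk, hu, rfl⟩ := exists_isCoprime_smul_eq hv
  refine ⟨u, hu, hcv.trans_le ?_⟩
  rw [enorm2_mulVec_intCast_smul]
  refine Real.rpow_le_rpow_of_nonpos (enorm2_mulVec_intCast_pos hdet (ne_zero_of_isCoprime hu))
    (le_mul_of_one_le_left (enorm2_nonneg _) ?_) (by norm_num)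
  push_cast
  rw [Nat.abs_cast]
  exact_mod_cast hk

lemma alpha0_le_rpow_add_three (hdet : g.det = 1) {u : Fin 2 → ℤ} (hu : IsCoprime (u 0) (u 1))
    (hshort : enorm2 (g *ᵥ fun i => (u i : ℝ)) ≤ 8) :
    alpha0 g ≤ enorm2 (g *ᵥ fun i => (u i : ℝ)) ^ (-(1 / 2 : ℝ)) + 3 := by
  have hu_pos := enorm2_mulVec_intCast_pos hdet (ne_zero_of_isCoprime hu)
  refine alpha0_le fun w hw => ?_
  by_cases hwu : w 0 * u 1 - w 1 * u 0 = 0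
  · obtain ⟨k, rfl⟩ := exists_eq_smul_of_cross_eq_zero hu hwu
    have hk : (1 : ℝ) ≤ |(k : ℝ)| := by
      have : k ≠ 0 := by rintro rfl; simp at hw
      exact_mod_cast Int.one_le_abs this
    rw [enorm2_mulVec_intCast_smul]
    linarith [Real.rpow_le_rpow_of_nonpos hu_pos (le_mul_of_one_le_left hu_pos.le hk)
      (by norm_num : -(1 / 2 : ℝ) ≤ 0)]
  · have hlong := rpow_neg_half_le_sqrt_mul one_pos (by norm_num : (0 : ℝ) < 8)
      (show 1 ≤ 8 * enorm2 (g *ᵥ fun i => (w i : ℝ)) by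
        nlinarith [one_le_enorm2_mulVec_mul_enorm2_mulVec hdet hwu,
          enorm2_nonneg (g *ᵥ fun i => (w i : ℝ))])
    have h8 : √8 ≤ 3 := Real.sqrt_le_iff.2 ⟨by norm_num, by norm_num⟩
    rw [Real.one_rpow, mul_one] at hlong
    linarith [Real.rpow_nonneg hu_pos.le (-(1 / 2 : ℝ))]

end Alpha0

noncomputable def aU (t s : ℝ) : Matrix (Fin 2) (Fin 2) ℝ :=
  !![Real.exp t, Real.exp t * s; 0, Real.exp (-t)]

lemma det_aU (t s : ℝ) : (aU t s).det = 1 := by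
  simp [aU, Matrix.det_fin_two, ← Real.exp_add]

lemma abs_aU_apply_le {t s : ℝ} (ht : 0 ≤ t) (hs : |s| ≤ 1) (i j : Fin 2) :
    |aU t s i j| ≤ Real.exp t := by
  have hE := (Real.exp_pos t).le
  fin_cases i <;> fin_cases j <;> simp [aU, abs_mul, hE, ht, mul_le_of_le_one_right hE hs]

lemma exp_mul_abs_le_enorm2_aU_mulVec (t s : ℝ) (x : Fin 2 → ℝ) :
    Real.exp t * |x 0 + s * x 1| ≤ enorm2 (aU t s *ᵥ x) := by
  have hx0 : (aU t s *ᵥ x) 0 = Real.exp t * (x 0 + s * x 1) := by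
    simp only [aU, mulVec_apply_fin_two, of_apply, cons_val', cons_val_zero, cons_val_fin_one,
      cons_val_one]
    ring
  calc Real.exp t * |x 0 + s * x 1| = |(aU t s *ᵥ x) 0| := by
        rw [hx0, abs_mul, abs_of_pos (Real.exp_pos t)]
    _ ≤ enorm2 (aU t s *ᵥ x) := abs_apply_zero_le_enorm2 _

/-- For `x < 0`, Mathlib's `x ^ y` is `|x| ^ y * cos (π y)`, which vanishes at `y = -1/2`. -/
lemma abs_rpow_neg_half (x : ℝ) :
    |x| ^ (-(1 / 2 : ℝ)) = x ^ (-(1 / 2 : ℝ)) + (-x) ^ (-(1 / 2 : ℝ)) := by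
  have hcos : Real.cos (-(1 / 2 : ℝ) * Real.pi) = 0 := by
    rw [show -(1 / 2 : ℝ) * Real.pi = -(Real.pi / 2) by ring, Real.cos_neg, Real.cos_pi_div_two]
  rcases lt_trichotomy x 0 with hx | rfl | hx
  · rw [abs_of_neg hx, Real.rpow_def_of_neg hx, hcos, mul_zero, zero_add]
  · simp
  · rw [abs_of_pos hx, Real.rpow_def_of_neg (neg_neg_of_pos hx), hcos, mul_zero, add_zero]

lemma integral_sub_rpow_neg_half_le (c : ℝ) : ∫ s in (-1 : ℝ)..1, (s - c) ^ (-(1 / 2 : ℝ)) ≤ 3 := by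
  rw [intervalIntegral.integral_comp_sub_right (fun s => s ^ (-(1 / 2 : ℝ))),
    integral_rpow (Or.inl (by norm_num)), show -(1 / 2 : ℝ) + 1 = 1 / 2 by norm_num,
    ← Real.sqrt_eq_rpow, ← Real.sqrt_eq_rpow, div_le_iff₀ (by norm_num),
    show 1 - c = (-1 - c) + 2 by ring]
  generalize -1 - c = d
  have hd : √(d + 2) ≤ √d + 3 / 2 := by
    refine Real.sqrt_le_iff.2 ⟨by positivity, ?_⟩
    rcases le_total d 0 with hd | hd
    · rw [Real.sqrt_eq_zero'.2 hd]
      linarith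
    · nlinarith [Real.sq_sqrt hd, Real.sqrt_nonneg d]
  linarith

lemma intervalIntegrable_sub_rpow_neg_half (c : ℝ) :
    IntervalIntegrable (fun s => (s - c) ^ (-(1 / 2 : ℝ))) volume (-1) 1 := by
  simpa using (intervalIntegral.intervalIntegrable_rpow' (a := -1 - c) (b := 1 - c)
    (by norm_num : (-1 : ℝ) < -(1 / 2))).comp_sub_right c

lemma intervalIntegrable_neg_sub_rpow_neg_half (c : ℝ) :
    IntervalIntegrable (fun s => (-(s - c)) ^ (-(1 / 2 : ℝ))) volume (-1) 1 := by
  simp_rw [neg_sub]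
  simpa using (intervalIntegral.intervalIntegrable_rpow' (a := c + 1) (b := c - 1)
    (by norm_num : (-1 : ℝ) < -(1 / 2))).comp_sub_left c

lemma intervalIntegrable_abs_sub_rpow_neg_half (c : ℝ) :
    IntervalIntegrable (fun s => |s - c| ^ (-(1 / 2 : ℝ))) volume (-1) 1 := by
  simp_rw [abs_rpow_neg_half]
  exact (intervalIntegrable_sub_rpow_neg_half c).add (intervalIntegrable_neg_sub_rpow_neg_half c)

lemma integral_abs_sub_rpow_neg_half_le (c : ℝ) :
    ∫ s in (-1 : ℝ)..1, |s - c| ^ (-(1 / 2 : ℝ)) ≤ 6 := by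
  simp_rw [abs_rpow_neg_half]
  rw [intervalIntegral.integral_add (intervalIntegrable_sub_rpow_neg_half c)
    (intervalIntegrable_neg_sub_rpow_neg_half c)]
  have hneg : ∫ s in (-1 : ℝ)..1, (-(s - c)) ^ (-(1 / 2 : ℝ))
      = ∫ s in (-1 : ℝ)..1, (s - -c) ^ (-(1 / 2 : ℝ)) := by
    have := intervalIntegral.integral_comp_neg (a := -1) (b := 1)
      fun s => (s - -c) ^ (-(1 / 2 : ℝ))
    rw [neg_neg] at this
    rw [← this]
    congr 1
    ext s
    ring_nf
  linarith [integral_sub_rpow_neg_half_le c, integral_sub_rpow_neg_half_le (-c)]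

lemma abs_add_mul_rpow_neg_half {x : Fin 2 → ℝ} (hx : x 1 ≠ 0) (s : ℝ) :
    |x 0 + s * x 1| ^ (-(1 / 2 : ℝ)) =
      |x 1| ^ (-(1 / 2 : ℝ)) * |s - -x 0 / x 1| ^ (-(1 / 2 : ℝ)) := by
  rw [← Real.mul_rpow (abs_nonneg _) (abs_nonneg _), ← abs_mul]
  congr 2
  field_simp
  ring

lemma intervalIntegrable_abs_add_mul_rpow_neg_half (x : Fin 2 → ℝ) :
    IntervalIntegrable (fun s => |x 0 + s * x 1| ^ (-(1 / 2 : ℝ))) volume (-1) 1 := by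
  by_cases hx : x 1 = 0
  · simp [hx]
  · simp_rw [abs_add_mul_rpow_neg_half hx]
    exact (intervalIntegrable_abs_sub_rpow_neg_half _).const_mul _

lemma integral_abs_add_mul_rpow_neg_half_le {x : Fin 2 → ℝ} (hx : x ≠ 0) :
    ∫ s in (-1 : ℝ)..1, |x 0 + s * x 1| ^ (-(1 / 2 : ℝ)) ≤ 12 * enorm2 x ^ (-(1 / 2 : ℝ)) := by
  have hr := enorm2_pos hx
  have hsqrt4 : √(4 : ℝ) = 2 := by
    rw [show (4 : ℝ) = 2 ^ 2 by norm_num, Real.sqrt_sq (by norm_num)]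
  have hr_nonneg := Real.rpow_nonneg hr.le (-(1 / 2 : ℝ))
  have hnorm := enorm2_le_abs_add_abs x
  rcases le_or_gt (2 * |x 1|) |x 0| with hx0 | hx1
  · have hpt : ∀ s ∈ Icc (-1 : ℝ) 1,
        |x 0 + s * x 1| ^ (-(1 / 2 : ℝ)) ≤ 2 * enorm2 x ^ (-(1 / 2 : ℝ)) := fun s hs => by
      have hsx : |s * x 1| ≤ |x 1| := by
        rw [abs_mul]
        exact mul_le_of_le_one_left (abs_nonneg _) (abs_le.2 hs)
      have htri := abs_add_le (x 0 + s * x 1) (-(s * x 1))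
      rw [add_neg_cancel_right, abs_neg] at htri
      have := rpow_neg_half_le_sqrt_mul hr (by norm_num : (0 : ℝ) < 4)
        (show enorm2 x ≤ 4 * |x 0 + s * x 1| by linarith)
      rwa [hsqrt4] at this
    calc ∫ s in (-1 : ℝ)..1, |x 0 + s * x 1| ^ (-(1 / 2 : ℝ))
        ≤ ∫ s in (-1 : ℝ)..1, 2 * enorm2 x ^ (-(1 / 2 : ℝ)) :=
          intervalIntegral.integral_mono_on (by norm_num)
            (intervalIntegrable_abs_add_mul_rpow_neg_half x) intervalIntegrable_const hpt
      _ ≤ 12 * enorm2 x ^ (-(1 / 2 : ℝ)) := by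
          rw [intervalIntegral.integral_const, smul_eq_mul]
          linarith
  · have hx1' : x 1 ≠ 0 := fun h0 => by
      rw [h0, abs_zero, mul_zero] at hx1
      linarith [abs_nonneg (x 0)]
    have hcoef := rpow_neg_half_le_sqrt_mul hr (by norm_num : (0 : ℝ) < 4)
      (show enorm2 x ≤ 4 * |x 1| by linarith)
    rw [hsqrt4] at hcoef
    simp_rw [abs_add_mul_rpow_neg_half hx1']
    rw [intervalIntegral.integral_const_mul]
    have hint := integral_abs_sub_rpow_neg_half_le (-x 0 / x 1)
    calc |x 1| ^ (-(1 / 2 : ℝ)) * ∫ s in (-1 : ℝ)..1, |s - -x 0 / x 1| ^ (-(1 / 2 : ℝ))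
        ≤ (2 * enorm2 x ^ (-(1 / 2 : ℝ))) * 6 := by
          gcongr
          exact intervalIntegral.integral_nonneg (by norm_num)
            fun s _ => Real.rpow_nonneg (abs_nonneg _) _
      _ = 12 * enorm2 x ^ (-(1 / 2 : ℝ)) := by ring

lemma ae_add_mul_ne_zero {x : Fin 2 → ℝ} (hx : x ≠ 0) : ∀ᵐ s ∂volume, x 0 + s * x 1 ≠ 0 := by
  filter_upwards [volume.ae_ne (-x 0 / x 1)] with s hs h0
  by_cases hx1 : x 1 = 0
  · rw [hx1, mul_zero, add_zero] at h0
    exact hx (by ext i; fin_cases i <;> simp [h0, hx1])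
  · exact hs (by field_simp; linarith)

lemma setIntegral_Icc_le_intervalIntegral {f g : ℝ → ℝ} {a b : ℝ} (hab : a ≤ b)
    (hf : ∀ s ∈ Icc a b, 0 ≤ f s) (hg : IntervalIntegrable g volume a b)
    (hfg : ∀ᵐ s, s ∈ Icc a b → f s ≤ g s) : ∫ s in Icc a b, f s ≤ ∫ s in a..b, g s := by
  rw [intervalIntegral.integral_of_le hab, ← integral_Icc_eq_integral_Ioc]
  exact integral_mono_of_nonneg (ae_restrict_of_forall_mem measurableSet_Icc hf)
    ((intervalIntegrable_iff_integrableOn_Icc_of_le hab).1 hg)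
    ((ae_restrict_iff' measurableSet_Icc).2 hfg)

section Integrals

variable {t : ℝ} {h : Matrix (Fin 2) (Fin 2) ℝ}

lemma integral_alpha0_aU_mul_lt_of_alpha0_le (ht : 0 ≤ t) (hdet : h.det = 1)
    (hα : alpha0 h ≤ √(Real.exp t) / 2) :
    ∫ s in Icc (-1 : ℝ) 1, alpha0 (aU t s * h) < 2 * Real.exp t := by
  have hE := Real.exp_pos t
  have hpt : ∀ s ∈ Icc (-1 : ℝ) 1,
      alpha0 (aU t s * h) ≤ √(2 * Real.exp t) * (√(Real.exp t) / 2) := fun s hs =>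
    (alpha0_mul_le (by positivity)
      (enorm2_le_mulVec (det_aU t s) (abs_aU_apply_le ht (abs_le.2 hs))) hdet).trans
      (by gcongr)
  calc ∫ s in Icc (-1 : ℝ) 1, alpha0 (aU t s * h)
      ≤ ∫ _ in (-1 : ℝ)..1, √(2 * Real.exp t) * (√(Real.exp t) / 2) :=
        setIntegral_Icc_le_intervalIntegral (by norm_num) (fun _ _ => alpha0_nonneg _)
          intervalIntegrable_const (ae_of_all _ hpt)
    _ = √2 * Real.exp t := by
        rw [intervalIntegral.integral_const, smul_eq_mul, Real.sqrt_mul (by norm_num)]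
        have := Real.mul_self_sqrt hE.le
        linear_combination √2 * this
    _ < 2 * Real.exp t := by
        gcongr
        rw [Real.sqrt_lt' (by norm_num)]
        norm_num

lemma alpha0_aU_mul_le_of_short (ht : 0 ≤ t) {s : ℝ} (hs : |s| ≤ 1) (hdet : h.det = 1)
    {u : Fin 2 → ℤ} (hu : IsCoprime (u 0) (u 1)) {b : Fin 2 → ℝ}
    (hb : (h *ᵥ fun i => (u i : ℝ)) = b) (hshort : Real.exp t * enorm2 b ≤ 4)
    (hne : b 0 + s * b 1 ≠ 0) :
    alpha0 (aU t s * h) ≤ (√(Real.exp t))⁻¹ * |b 0 + s * b 1| ^ (-(1 / 2 : ℝ)) + 3 := by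
  have hE := Real.exp_pos t
  have hMb : enorm2 (aU t s *ᵥ b) ≤ 8 :=
    (enorm2_mulVec_le (abs_aU_apply_le ht hs) b).trans (by linarith)
  have hlow : |b 0 + s * b 1| ≤ (Real.exp t)⁻¹ * enorm2 (aU t s *ᵥ b) := by
    rw [inv_mul_eq_div, le_div_iff₀ hE, mul_comm]
    exact exp_mul_abs_le_enorm2_aU_mulVec t s b
  have hdet' : (aU t s * h).det = 1 := by rw [Matrix.det_mul, det_aU, hdet, one_mul]
  have hα := alpha0_le_rpow_add_three hdet' hu (by rwa [← Matrix.mulVec_mulVec, hb])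
  rw [← Matrix.mulVec_mulVec, hb] at hα
  have hb_rpow := rpow_neg_half_le_sqrt_mul (abs_pos.2 hne) (inv_pos.2 hE) hlow
  rw [Real.sqrt_inv] at hb_rpow
  linarith

lemma integral_alpha0_aU_mul_le_of_lt_alpha0 (ht : 0 ≤ t) (hdet : h.det = 1)
    (hα : √(Real.exp t) / 2 < alpha0 h) :
    ∫ s in Icc (-1 : ℝ) 1, alpha0 (aU t s * h) ≤ (√(Real.exp t))⁻¹ * (12 * alpha0 h) + 6 := by
  have hE := Real.exp_pos t
  obtain ⟨u, hu, hlt⟩ := exists_isCoprime_lt_rpow_of_lt_alpha0 hdet hα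
  set b := h *ᵥ fun i => (u i : ℝ) with hb
  have hb_pos : 0 < enorm2 b := enorm2_mulVec_intCast_pos hdet (ne_zero_of_isCoprime hu)
  have hb0 : b ≠ 0 := fun h0 => by simp [h0, enorm2] at hb_pos
  have hshort : Real.exp t * enorm2 b ≤ 4 := by
    have := sq_mul_lt_one_of_lt_rpow_neg_half (by positivity) hlt
    rw [div_pow, Real.sq_sqrt hE.le] at this
    linarith
  have hpt : ∀ᵐ s, s ∈ Icc (-1 : ℝ) 1 →
      alpha0 (aU t s * h) ≤ (√(Real.exp t))⁻¹ * |b 0 + s * b 1| ^ (-(1 / 2 : ℝ)) + 3 := by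
    filter_upwards [ae_add_mul_ne_zero hb0] with s hne hs
    exact alpha0_aU_mul_le_of_short ht (abs_le.2 hs) hdet hu hb.symm hshort hne
  have hint := intervalIntegrable_abs_add_mul_rpow_neg_half b
  calc ∫ s in Icc (-1 : ℝ) 1, alpha0 (aU t s * h)
      ≤ ∫ s in (-1 : ℝ)..1, ((√(Real.exp t))⁻¹ * |b 0 + s * b 1| ^ (-(1 / 2 : ℝ)) + 3) :=
        setIntegral_Icc_le_intervalIntegral (by norm_num) (fun _ _ => alpha0_nonneg _)
          ((hint.const_mul _).add intervalIntegrable_const) hpt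
    _ = (√(Real.exp t))⁻¹ * (∫ s in (-1 : ℝ)..1, |b 0 + s * b 1| ^ (-(1 / 2 : ℝ))) + 6 := by
        rw [intervalIntegral.integral_add (hint.const_mul _) intervalIntegrable_const,
          intervalIntegral.integral_const_mul, intervalIntegral.integral_const]
        norm_num
    _ ≤ (√(Real.exp t))⁻¹ * (12 * enorm2 b ^ (-(1 / 2 : ℝ))) + 6 := by
        gcongr
        exact integral_abs_add_mul_rpow_neg_half_le hb0
    _ ≤ (√(Real.exp t))⁻¹ * (12 * alpha0 h) + 6 := by
        gcongr
        exact rpow_le_alpha0 hdet (ne_zero_of_isCoprime hu)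

end Integrals

/-- For every `t ≥ 20` and every affine lattice `x = (h,ξ)Γ`,
`∫_{-1}^{1} α₀(aₜu(s)x) ds < (1/4)·α₀(x) + 2eᵗ`, where
`aₜu(s) = [[eᵗ, eᵗs],[0,e⁻ᵗ]]` acts by left multiplication on the matrix part. -/
theorem stmt_8 (t : ℝ) (ht : 20 ≤ t) (h : Matrix (Fin 2) (Fin 2) ℝ) (hdet : h.det = 1) :
    (∫ s in Set.Icc (-1 : ℝ) 1,
        alpha0 (!![Real.exp t, Real.exp t * s; 0, Real.exp (-t)] * h)) <
      (1 / 4) * alpha0 h + 2 * Real.exp t := by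
  have ht0 : 0 ≤ t := by linarith
  have hexp : 48 ^ 2 ≤ Real.exp t := calc
    (48 : ℝ) ^ 2 ≤ 20 ^ 4 / (4 : ℕ).factorial := by norm_num [Nat.factorial]
    _ ≤ t ^ 4 / (4 : ℕ).factorial := by gcongr
    _ ≤ Real.exp t := Real.pow_div_factorial_le_exp t ht0 4
  have hα0 := alpha0_nonneg h
  change ∫ s in Icc (-1 : ℝ) 1, alpha0 (aU t s * h) < _
  rcases le_or_gt (alpha0 h) (√(Real.exp t) / 2) with hα | hα
  · linarith [integral_alpha0_aU_mul_lt_of_alpha0_le ht0 hdet hα]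
  · have hinv : (√(Real.exp t))⁻¹ ≤ 1 / 48 := by
      rw [one_div, inv_le_inv₀ (by positivity) (by norm_num)]
      exact Real.le_sqrt_of_sq_le hexp
    calc ∫ s in Icc (-1 : ℝ) 1, alpha0 (aU t s * h)
        ≤ (√(Real.exp t))⁻¹ * (12 * alpha0 h) + 6 :=
          integral_alpha0_aU_mul_le_of_lt_alpha0 ht0 hdet hα
      _ ≤ 1 / 48 * (12 * alpha0 h) + 6 := by gcongr
      _ < 1 / 4 * alpha0 h + 2 * Real.exp t := by linarith
end

section
/- For every real $r\ge1$ and $s\in[0,1]$, with $L_r(s)$ denoting the normalized gap containing $s$ of the fractional parts of $\{\sqrt1,\dots,\sqrt{\lfloor r\rfloor}\}$, one has $\frac{\lfloor r\rfloor}{(\lfloor\sqrt r\rfloor+1)^2} L_{(\lfloor\sqrt r\rfloor+1)^2}(s) \le L_r(s) \le \frac{\lfloor r\rfloor}{\lfloor\sqrt r\rfloor^2} L_{\lfloor\sqrt r\rfloor^2}(s)$. -/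
open Set

/-- The set of fractional parts of `√1, √2, …, √m`. -/
def sqrtFracs (m : ℕ) : Set ℝ :=
  (fun n : ℕ => Int.fract (Real.sqrt n)) '' (Set.Icc 1 m)

/-- The left endpoint of the gap of `sqrtFracs m` containing `s`, i.e. the largest
fractional part `≤ s`. -/
noncomputable def gapLower (m : ℕ) (s : ℝ) : ℝ :=
  sSup {x ∈ sqrtFracs m | x ≤ s}

/-- The right endpoint of the gap of `sqrtFracs m` containing `s`, i.e. the smallest
fractional part `> s`, or `1` if there is none (the convention `t_{⌊r⌋+1} = 1`). -/
noncomputable def gapUpper (m : ℕ) (s : ℝ) : ℝ :=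
  sInf ({x ∈ sqrtFracs m | s < x} ∪ {1})

/-- `L r s`: the normalized length of the gap containing `s` of the fractional parts of
`√1, …, √⌊r⌋`. -/
noncomputable def Lgap (r : ℝ) (s : ℝ) : ℝ :=
  (Nat.floor r : ℝ) * (gapUpper (Nat.floor r) s - gapLower (Nat.floor r) s)

/-!
Since `⌊√r⌋₊ = Nat.sqrt ⌊r⌋₊`, the integer `m = ⌊r⌋₊` lies between `a²` and `(a + 1)²` for
`a = ⌊√r⌋₊`, so `sqrtFracs (a²) ⊆ sqrtFracs m ⊆ sqrtFracs ((a + 1)²)`. Adding points to the set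
of fractional parts can only raise the left end and lower the right end of the gap containing
`s`, so the unnormalized gap length decreases; multiplying by `m` gives both inequalities.
-/

theorem Nat.floor_sqrt_eq_sqrt_floor (r : ℝ) : ⌊√r⌋₊ = Nat.sqrt ⌊r⌋₊ := by
  rcases lt_or_ge r 0 with hr | hr
  · simp [Nat.floor_of_nonpos hr.le, Real.sqrt_eq_zero'.mpr hr.le]
  refine eq_of_forall_le_iff fun k => ?_
  rw [Nat.le_floor_iff (Real.sqrt_nonneg r), Nat.le_sqrt', Nat.le_floor_iff hr,
    Real.le_sqrt (Nat.cast_nonneg k) hr, Nat.cast_pow]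

lemma sqrtFracs_mono : Monotone sqrtFracs := fun _ _ h =>
  image_mono (Icc_subset_Icc_right h)

lemma nonneg_of_mem_sqrtFracs {m : ℕ} {x : ℝ} (hx : x ∈ sqrtFracs m) : 0 ≤ x := by
  obtain ⟨n, -, rfl⟩ := hx
  exact Int.fract_nonneg _

lemma gapLower_mono (s : ℝ) : Monotone (gapLower · s) := by
  intro m₁ m₂ h
  simp only [gapLower]
  have hsub : {x ∈ sqrtFracs m₁ | x ≤ s} ⊆ {x ∈ sqrtFracs m₂ | x ≤ s} :=
    fun x hx => ⟨sqrtFracs_mono h hx.1, hx.2⟩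
  rcases eq_empty_or_nonempty {x ∈ sqrtFracs m₁ | x ≤ s} with hempty | hne
  · rw [hempty, Real.sSup_empty]
    exact Real.sSup_nonneg fun x hx => nonneg_of_mem_sqrtFracs hx.1
  · exact csSup_le_csSup ⟨s, fun x hx => hx.2⟩ hne hsub

lemma gapUpper_anti (s : ℝ) : Antitone (gapUpper · s) := by
  intro m₁ m₂ h
  refine csInf_le_csInf ⟨0, ?_⟩ ⟨1, Or.inr rfl⟩
    (union_subset_union_left _ fun x hx => ⟨sqrtFracs_mono h hx.1, hx.2⟩)
  rintro x (hx | rfl)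
  · exact nonneg_of_mem_sqrtFracs hx.1
  · exact zero_le_one

noncomputable def gapLength (m : ℕ) (s : ℝ) : ℝ :=
  gapUpper m s - gapLower m s

lemma gapLength_anti (s : ℝ) : Antitone (gapLength · s) := fun _ _ h =>
  sub_le_sub (gapUpper_anti s h) (gapLower_mono s h)

lemma Lgap_natCast (k : ℕ) (s : ℝ) : Lgap k s = k * gapLength k s := by
  rw [Lgap, Nat.floor_natCast, gapLength]

lemma Lgap_natCast_floor (r s : ℝ) : Lgap (⌊r⌋₊ : ℕ) s = Lgap r s := by
  rw [Lgap_natCast, Lgap, gapLength]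

lemma div_mul_Lgap_le_Lgap {m k : ℕ} (hmk : m ≤ k) (s : ℝ) :
    (m / k : ℝ) * Lgap k s ≤ Lgap m s := by
  rcases k.eq_zero_or_pos with rfl | hk
  · simp [Nat.le_zero.mp hmk, Lgap]
  rw [Lgap_natCast, Lgap_natCast, ← mul_assoc, div_mul_cancel₀ _ (by positivity)]
  exact mul_le_mul_of_nonneg_left (gapLength_anti s hmk) m.cast_nonneg

lemma Lgap_le_div_mul_Lgap {m k : ℕ} (hk : 0 < k) (hkm : k ≤ m) (s : ℝ) :
    Lgap m s ≤ (m / k : ℝ) * Lgap k s := by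
  rw [Lgap_natCast, Lgap_natCast, ← mul_assoc, div_mul_cancel₀ _ (by positivity)]
  exact mul_le_mul_of_nonneg_left (gapLength_anti s hkm) m.cast_nonneg

theorem stmt_9_general (r : ℝ) (s : ℝ) :
    ((Nat.floor r : ℝ) / ((Nat.floor (Real.sqrt r) : ℝ) + 1) ^ 2) *
        Lgap (((Nat.floor (Real.sqrt r) + 1 : ℕ) ^ 2 : ℕ) : ℝ) s ≤ Lgap r s ∧
      Lgap r s ≤ ((Nat.floor r : ℝ) / (Nat.floor (Real.sqrt r) : ℝ) ^ 2) *
        Lgap (((Nat.floor (Real.sqrt r) : ℕ) ^ 2 : ℕ) : ℝ) s := by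
  rw [Nat.floor_sqrt_eq_sqrt_floor, ← Lgap_natCast_floor r]
  set m := ⌊r⌋₊
  rcases m.eq_zero_or_pos with hm | hm
  · simp [hm, Lgap]
  constructor
  · exact_mod_cast div_mul_Lgap_le_Lgap (Nat.lt_succ_sqrt' m).le s
  · exact_mod_cast Lgap_le_div_mul_Lgap (pow_pos (Nat.sqrt_pos.mpr hm) 2) (Nat.sqrt_le' m) s

/-- For every `r ≥ 1` and `s ∈ [0,1]`,
`(⌊r⌋/(⌊√r⌋+1)²)·L_{(⌊√r⌋+1)²}(s) ≤ L_r(s) ≤ (⌊r⌋/⌊√r⌋²)·L_{⌊√r⌋²}(s)`. -/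
theorem stmt_9 (r : ℝ) (hr : 1 ≤ r) (s : ℝ) (hs : s ∈ Set.Icc (0 : ℝ) 1) :
    ((Nat.floor r : ℝ) / ((Nat.floor (Real.sqrt r) : ℝ) + 1) ^ 2) *
        Lgap (((Nat.floor (Real.sqrt r) + 1 : ℕ) ^ 2 : ℕ) : ℝ) s ≤ Lgap r s ∧
      Lgap r s ≤ ((Nat.floor r : ℝ) / (Nat.floor (Real.sqrt r) : ℝ) ^ 2) *
        Lgap (((Nat.floor (Real.sqrt r) : ℕ) ^ 2 : ℕ) : ℝ) s :=
  stmt_9_general r s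
end

section
/- Let $Y$ be a topological space with a continuous flow $(\psi_t)_{t\in\mathbb{R}}$ and $f=\psi_\tau$ for some $\tau>0$. Let $\phi:I_0\to Y$ be a map on a compact interval $I_0$, $\beta:Y\to[1,\infty]$ measurable with $\beta(\phi(s))\le l_0$ for all $s\in I_0$ and satisfying $\beta(\psi_t f^m\phi(s))\le M\beta(f^m\phi(s))$ for all $t\in[0,\tau]$, $m\ge0$, $s\in I_0$. Suppose there exist a set $K_0=\{\beta\le l_0\}$ and constants $0<c_0<1$ such that for every $N\in\mathbb{N}$, $|\{s\in I_0: \mathcal D_{K_0}^N(s)\le 1-\varepsilon_0\}|\le c_0^N|I_0|$, where $\mathcal D_{K}^N(s)=\frac1N\#\{0\le m\le N-1: f^m\phi(s)\in K\}$. Then for every $\varepsilon>2\varepsilon_0$ there exist $l_1=l_0M^n$ (for suitable $n\in\mathbb N$) and $c_1=c_0^{1/2\tau}$ such that for $K=\{\beta\le l_1\}$ and every $T>0$: $|\{s\in I_0:\mathcal A_K^T(s)\le 1-\varepsilon\}|\le c_1^T|I_0|$, where $\mathcal A_K^T(s)=\frac1T\int_0^T\mathbf 1_K(\psi_t\phi(s))\,dt$.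 -/
open MeasureTheory
open scoped ENNReal

set_option maxHeartbeats 1000000 in
/-- Passing from a discrete-time large-deviation bound to a
continuous-time one along a flow. Let `(ψ_t)` be a continuous flow on `Y`, `f = ψ_τ`,
`φ : I₀ → Y`, `β : Y → [1,∞]` with `β(φ s) ≤ l₀` on `I₀` and
`β(ψ_t f^m φ(s)) ≤ M β(f^m φ(s))` for `t ∈ [0,τ]`. If for `K₀ = {β ≤ l₀}` the measure
of `{s : 𝓓_{K₀}^N(s) ≤ 1-ε₀}` is at most `c₀^N |I₀|` for every `N`, then for every
`ε > 2ε₀` there are `l₁ = l₀ Mⁿ` and `c₁ = c₀^{1/2τ}` with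
`|{s ∈ I₀ : 𝓐_K^T(s) ≤ 1-ε}| ≤ c₁^T |I₀|` for all `T > 0`, where `K = {β ≤ l₁}`. -/
theorem stmt_15 (Y : Type*) [TopologicalSpace Y]
    (ψ : ℝ → Y → Y) (hψ_cont : Continuous fun p : ℝ × Y => ψ p.1 p.2)
    (hψ_zero : ∀ y, ψ 0 y = y) (hψ_add : ∀ t t' y, ψ (t + t') y = ψ t (ψ t' y))
    (τ : ℝ) (hτ : 0 < τ)
    (x₀ y₀ : ℝ) (hxy : x₀ < y₀) (I₀ : Set ℝ) (hI₀ : I₀ = Set.Icc x₀ y₀)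
    (φ : ℝ → Y) (β : Y → ℝ≥0∞) (hβ : ∀ y, 1 ≤ β y)
    (l₀ : ℝ) (hl₀ : 0 < l₀)
    (hinit : ∀ s ∈ I₀, β (φ s) ≤ ENNReal.ofReal l₀)
    (M : ℝ) (hM : 1 ≤ M)
    (hLip : ∀ t ∈ Set.Icc (0 : ℝ) τ, ∀ m : ℕ, ∀ s ∈ I₀,
      β (ψ t ((ψ τ)^[m] (φ s))) ≤ ENNReal.ofReal M * β ((ψ τ)^[m] (φ s)))
    (ε₀ c₀ : ℝ) (hε₀ : 0 < ε₀) (hc₀ : c₀ ∈ Set.Ioo (0 : ℝ) 1)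
    (hdisc : ∀ N : ℕ,
      volume {s ∈ I₀ |
          (Set.ncard {m : ℕ | m < N ∧ β ((ψ τ)^[m] (φ s)) ≤ ENNReal.ofReal l₀} : ℝ) / N ≤
            1 - ε₀} ≤
        ENNReal.ofReal (c₀ ^ N) * volume I₀)
    (ε : ℝ) (hε : 2 * ε₀ < ε) :
    ∃ n : ℕ, ∀ T : ℝ, 0 < T →
      volume {s ∈ I₀ |
          (volume {t ∈ Set.Icc (0 : ℝ) T |
              β (ψ t (φ s)) ≤ ENNReal.ofReal (l₀ * M ^ n)}).toReal / T ≤ 1 - ε} ≤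
        ENNReal.ofReal ((c₀ ^ ((1 : ℝ) / (2 * τ))) ^ T) * volume I₀ := by
  classical
  have hεε₀ : 0 < ε - ε₀ := by linarith
  obtain ⟨n₀, hn₀⟩ := exists_nat_gt (1 / (ε - ε₀))
  set n : ℕ := n₀ + 2 with hn
  have hn2 : (2:ℝ) ≤ (n:ℝ) := by
    have : (2:ℕ) ≤ n := by omega
    exact_mod_cast this
  have hnε : 1 < (n : ℝ) * (ε - ε₀) := by
    have h1 : (1:ℝ)/(ε-ε₀) < (n:ℝ) := by
      refine lt_of_lt_of_le hn₀ ?_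
      exact_mod_cast Nat.le_add_right n₀ 2
    calc (1:ℝ) = (1/(ε-ε₀)) * (ε-ε₀) := by field_simp
    _ < n * (ε-ε₀) := mul_lt_mul_of_pos_right h1 hεε₀
  have hM0 : (0:ℝ) ≤ M := by linarith
  -- the flow at time m*τ is the m-th iterate of ψ τ
  have hψ_iter : ∀ (m : ℕ) (y : Y), ψ ((m:ℝ) * τ) y = (ψ τ)^[m] y := by
    intro m
    induction m with
    | zero => intro y; simpa using hψ_zero y
    | succ m ih =>
      intro y
      have h : ((m+1 : ℕ) : ℝ) * τ = τ + (m:ℝ) * τ := by push_cast; ring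
      rw [h, hψ_add, ih, Function.iterate_succ_apply']
  -- growth bound along the discrete orbit
  have hgrow : ∀ s ∈ I₀, ∀ m : ℕ, β ((ψ τ)^[m] (φ s)) ≤ ENNReal.ofReal (l₀ * M ^ m) := by
    intro s hs m
    induction m with
    | zero => simpa using hinit s hs
    | succ m ih =>
      rw [Function.iterate_succ_apply']
      calc β (ψ τ ((ψ τ)^[m] (φ s))) ≤ ENNReal.ofReal M * β ((ψ τ)^[m] (φ s)) :=
            hLip τ ⟨hτ.le, le_refl τ⟩ m s hs
      _ ≤ ENNReal.ofReal M * ENNReal.ofReal (l₀ * M ^ m) := mul_le_mul_right ih _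
      _ = ENNReal.ofReal (l₀ * M ^ (m+1)) := by
            rw [← ENNReal.ofReal_mul hM0]; ring_nf
  -- continuous-time bound on an interval [mτ, (m+1)τ]
  have hC : ∀ s ∈ I₀, ∀ m : ℕ, ∀ t ∈ Set.Icc ((m:ℝ)*τ) (((m:ℝ)+1)*τ),
      β (ψ t (φ s)) ≤ ENNReal.ofReal M * β ((ψ τ)^[m] (φ s)) := by
    intro s hs m t ht
    have h2 : ψ t (φ s) = ψ (t - (m:ℝ)*τ) ((ψ τ)^[m] (φ s)) := by
      rw [← hψ_iter, ← hψ_add]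
      norm_num
    rw [h2]
    exact hLip _ ⟨by linarith [ht.1], by nlinarith [ht.2]⟩ m s hs
  refine ⟨n, ?_⟩
  intro T hT
  rcases le_or_gt T ((n:ℝ) * τ) with hTle | hTgt
  · -- small T : the bad set is empty
    have hempty : {s ∈ I₀ |
        (volume {t ∈ Set.Icc (0 : ℝ) T |
            β (ψ t (φ s)) ≤ ENNReal.ofReal (l₀ * M ^ n)}).toReal / T ≤ 1 - ε} = ∅ := by
      ext s
      simp only [Set.mem_sep_iff, Set.mem_empty_iff_false, iff_false, not_and]
      intro hs hA
      -- every t ∈ [0,T] satisfies the condition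
      have hdecomp : ∀ k : ℕ, ∀ t : ℝ, t ∈ Set.Icc (0:ℝ) (((k:ℝ)+1)*τ) →
          ∃ m ≤ k, t ∈ Set.Icc ((m:ℝ)*τ) (((m:ℝ)+1)*τ) := by
        intro k
        induction k with
        | zero => intro t ht; exact ⟨0, le_refl 0, by simpa using ht⟩
        | succ k ih =>
          intro t ht
          rcases le_or_gt t (((k:ℝ)+1)*τ) with h | h
          · obtain ⟨m, hm, hmt⟩ := ih t ⟨ht.1, h⟩
            exact ⟨m, hm.trans (Nat.le_succ k), hmt⟩
          · refine ⟨k+1, le_refl _, ⟨by push_cast; linarith, ?_⟩⟩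
            have := ht.2
            push_cast at this ⊢
            linarith
      have hall : {t ∈ Set.Icc (0 : ℝ) T |
          β (ψ t (φ s)) ≤ ENNReal.ofReal (l₀ * M ^ n)} = Set.Icc (0:ℝ) T := by
        apply Set.eq_of_subset_of_subset (Set.sep_subset _ _)
        intro t ht
        refine ⟨ht, ?_⟩
        have hcast : (((n-1:ℕ)):ℝ) + 1 = (n:ℝ) := by
          have h1 : (1:ℕ) ≤ n := by omega
          push_cast [Nat.cast_sub h1]
          ring
        have htn : t ∈ Set.Icc (0:ℝ) (((((n-1:ℕ)):ℝ)+1)*τ) := by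
          refine ⟨ht.1, ?_⟩
          rw [hcast]
          linarith [ht.2]
        obtain ⟨m, hm, hmt⟩ := hdecomp (n-1) t htn
        have hmn : m + 1 ≤ n := by omega
        calc β (ψ t (φ s)) ≤ ENNReal.ofReal M * β ((ψ τ)^[m] (φ s)) := hC s hs m t hmt
        _ ≤ ENNReal.ofReal M * ENNReal.ofReal (l₀ * M ^ m) := mul_le_mul_right (hgrow s hs m) _
        _ = ENNReal.ofReal (l₀ * M ^ (m+1)) := by rw [← ENNReal.ofReal_mul hM0]; ring_nf
        _ ≤ ENNReal.ofReal (l₀ * M ^ n) := by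
            apply ENNReal.ofReal_le_ofReal
            exact mul_le_mul_of_nonneg_left (pow_le_pow_right₀ hM hmn) hl₀.le
      rw [hall, Real.volume_Icc] at hA
      rw [ENNReal.toReal_ofReal (by linarith)] at hA
      rw [div_le_iff₀ hT] at hA
      nlinarith
    rw [hempty]
    simp
  · -- large T
    set N : ℕ := ⌊T/τ⌋₊ with hN
    have hTτpos : 0 < T/τ := div_pos hT hτ
    have hnN : (n:ℝ) ≤ (N:ℝ) := by
      have h1 : (n:ℝ) ≤ T/τ := by
        rw [le_div_iff₀ hτ]; linarith
      exact_mod_cast Nat.le_floor h1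
    have hNpos : 0 < (N:ℝ) := by linarith
    have hNT : (N:ℝ)*τ ≤ T := by
      have h1 : (N:ℝ) ≤ T/τ := Nat.floor_le hTτpos.le
      calc (N:ℝ)*τ ≤ (T/τ)*τ := mul_le_mul_of_nonneg_right h1 hτ.le
      _ = T := by field_simp
    have hNT' : T - τ ≤ (N:ℝ)*τ := by
      have h1 : T/τ < (N:ℝ) + 1 := by exact_mod_cast Nat.lt_floor_add_one (T/τ)
      have h2 : T < ((N:ℝ)+1)*τ := by
        calc T = (T/τ)*τ := by field_simp
        _ < ((N:ℝ)+1)*τ := mul_lt_mul_of_pos_right h1 hτ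
      linarith
    have hT2τ : 2*τ ≤ T := by nlinarith
    -- subset claim
    have hsub : {s ∈ I₀ |
          (volume {t ∈ Set.Icc (0 : ℝ) T |
              β (ψ t (φ s)) ≤ ENNReal.ofReal (l₀ * M ^ n)}).toReal / T ≤ 1 - ε} ⊆
        {s ∈ I₀ |
          (Set.ncard {m : ℕ | m < N ∧ β ((ψ τ)^[m] (φ s)) ≤ ENNReal.ofReal l₀} : ℝ) / N ≤
            1 - ε₀} := by
      rintro s ⟨hsI, hA⟩
      refine ⟨hsI, ?_⟩
      by_contra hcon
      push_neg at hcon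
      set F : Finset ℕ :=
        (Finset.range N).filter (fun m => β ((ψ τ)^[m] (φ s)) ≤ ENNReal.ofReal l₀) with hF
      have hGF : {m : ℕ | m < N ∧ β ((ψ τ)^[m] (φ s)) ≤ ENNReal.ofReal l₀} = ↑F := by
        ext m; simp [hF, Finset.mem_filter, Finset.mem_range, and_comm]
      have hcard : ({m : ℕ | m < N ∧ β ((ψ τ)^[m] (φ s)) ≤ ENNReal.ofReal l₀}).ncard
          = F.card := by rw [hGF, Set.ncard_coe_finset]
      rw [hcard] at hcon
      have hcard_lb : (1-ε₀) * (N:ℝ) < (F.card : ℝ) := by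
        rw [lt_div_iff₀ hNpos] at hcon
        linarith
      -- the union of good time intervals
      have hdisj : (↑F : Set ℕ).PairwiseDisjoint
          (fun m : ℕ => Set.Ico ((m:ℝ)*τ) (((m:ℝ)+1)*τ)) := by
        intro a _ b _ hab
        apply Set.Ico_disjoint_Ico.mpr
        rcases lt_or_gt_of_ne hab with h | h
        · have hab' : ((a:ℝ)+1) ≤ (b:ℝ) := by exact_mod_cast h
          refine le_trans (min_le_left _ _) (le_trans ?_ (le_max_right _ _))
          nlinarith
        · have hab' : ((b:ℝ)+1) ≤ (a:ℝ) := by exact_mod_cast h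
          refine le_trans (min_le_right _ _) (le_trans ?_ (le_max_left _ _))
          nlinarith
      have hUvol : volume (⋃ m ∈ F, Set.Ico ((m:ℝ)*τ) (((m:ℝ)+1)*τ))
          = (F.card : ℝ≥0∞) * ENNReal.ofReal τ := by
        rw [measure_biUnion_finset hdisj (fun m _ => measurableSet_Ico)]
        have hvol : ∀ m : ℕ, volume (Set.Ico ((m:ℝ)*τ) (((m:ℝ)+1)*τ)) = ENNReal.ofReal τ := by
          intro m; rw [Real.volume_Ico]; ring_nf
        rw [Finset.sum_congr rfl (fun m _ => hvol m), Finset.sum_const, nsmul_eq_mul]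
      have hUsub : (⋃ m ∈ F, Set.Ico ((m:ℝ)*τ) (((m:ℝ)+1)*τ)) ⊆
          {t ∈ Set.Icc (0 : ℝ) T | β (ψ t (φ s)) ≤ ENNReal.ofReal (l₀ * M ^ n)} := by
        intro t ht
        simp only [Set.mem_iUnion, exists_prop] at ht
        obtain ⟨m, hmF, htm⟩ := ht
        rw [hF, Finset.mem_filter, Finset.mem_range] at hmF
        obtain ⟨hmN, hmβ⟩ := hmF
        have hm1N : (m:ℝ) + 1 ≤ (N:ℝ) := by exact_mod_cast hmN
        constructor
        · constructor
          · have h0 : (0:ℝ) ≤ (m:ℝ)*τ := by positivity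
            linarith [htm.1]
          · have h0 : ((m:ℝ)+1)*τ ≤ (N:ℝ)*τ := mul_le_mul_of_nonneg_right hm1N hτ.le
            linarith [htm.2]
        · calc β (ψ t (φ s)) ≤ ENNReal.ofReal M * β ((ψ τ)^[m] (φ s)) :=
              hC s hsI m t ⟨htm.1, htm.2.le⟩
          _ ≤ ENNReal.ofReal M * ENNReal.ofReal l₀ := mul_le_mul_right hmβ _
          _ = ENNReal.ofReal (M * l₀) := (ENNReal.ofReal_mul hM0).symm
          _ ≤ ENNReal.ofReal (l₀ * M ^ n) := by
              apply ENNReal.ofReal_le_ofReal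
              have hMn : M ≤ M ^ n := le_self_pow₀ hM (by omega)
              nlinarith
      -- volume lower bound
      set S := {t ∈ Set.Icc (0 : ℝ) T | β (ψ t (φ s)) ≤ ENNReal.ofReal (l₀ * M ^ n)} with hS
      have hSfin : volume S ≤ ENNReal.ofReal T := by
        calc volume S ≤ volume (Set.Icc (0:ℝ) T) := measure_mono (Set.sep_subset _ _)
        _ = ENNReal.ofReal T := by rw [Real.volume_Icc]; ring_nf
      have hSlb : ENNReal.ofReal ((F.card:ℝ) * τ) ≤ volume S := by
        calc ENNReal.ofReal ((F.card:ℝ) * τ) = (F.card : ℝ≥0∞) * ENNReal.ofReal τ := by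
              rw [ENNReal.ofReal_mul (by positivity), ENNReal.ofReal_natCast]
        _ = volume (⋃ m ∈ F, Set.Ico ((m:ℝ)*τ) (((m:ℝ)+1)*τ)) := hUvol.symm
        _ ≤ volume S := measure_mono hUsub
      have hSne : volume S ≠ ⊤ := ne_top_of_le_ne_top ENNReal.ofReal_ne_top hSfin
      have hSreal : (F.card:ℝ) * τ ≤ (volume S).toReal := by
        have h := ENNReal.toReal_mono hSne hSlb
        rwa [ENNReal.toReal_ofReal (by positivity)] at h
      -- key numeric inequality
      have hkey : (1-ε) * T ≤ (1-ε₀) * ((N:ℝ)*τ) := by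
        rcases le_or_gt 0 (1-ε₀) with h0 | h0
        · have h1 : (1-ε₀)*(T-τ) ≤ (1-ε₀)*((N:ℝ)*τ) := mul_le_mul_of_nonneg_left hNT' h0
          have h2 : (ε-ε₀)*((n:ℝ)*τ) ≤ (ε-ε₀)*T :=
            mul_le_mul_of_nonneg_left (by linarith) hεε₀.le
          nlinarith
        · nlinarith
      have hAT : (volume S).toReal ≤ (1-ε)*T := (div_le_iff₀ hT).mp hA
      have hcardτ : (1-ε₀) * ((N:ℝ)*τ) < (F.card:ℝ) * τ := by nlinarith
      linarith
    calc volume {s ∈ I₀ |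
          (volume {t ∈ Set.Icc (0 : ℝ) T |
              β (ψ t (φ s)) ≤ ENNReal.ofReal (l₀ * M ^ n)}).toReal / T ≤ 1 - ε}
        ≤ volume {s ∈ I₀ |
          (Set.ncard {m : ℕ | m < N ∧ β ((ψ τ)^[m] (φ s)) ≤ ENNReal.ofReal l₀} : ℝ) / N ≤
            1 - ε₀} := measure_mono hsub
      _ ≤ ENNReal.ofReal (c₀ ^ N) * volume I₀ := hdisc N
      _ ≤ ENNReal.ofReal ((c₀ ^ ((1 : ℝ) / (2 * τ))) ^ T) * volume I₀ := by
          apply mul_le_mul_left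
          apply ENNReal.ofReal_le_ofReal
          have hle : 1/(2*τ)*T ≤ (N:ℝ) := by
            rw [div_mul_eq_mul_div, one_mul, div_le_iff₀ (by positivity)]
            nlinarith
          rw [← Real.rpow_natCast c₀ N, ← Real.rpow_mul hc₀.1.le]
          exact Real.rpow_le_rpow_of_exponent_ge hc₀.1 hc₀.2.le hle
end

section
/- Fix $0<\alpha,\sigma<1$ and $\varepsilon>0$, and assume there is $k\in\mathbb{N}$ with $1-\varepsilon<k\alpha<1$. For $n\ge0$ let $d_n=\lfloor1/(\sigma\alpha^n)\rfloor$ and $\mathcal I_n$ the partition of $[0,d_n\sigma\alpha^n]$ into $d_n$ intervals of length $\sigma\alpha^n$. Let $\{A_n\}_{n\ge0}$ be subsets of $[0,1]$ such that $A_n$ is a union of intervals from $\mathcal I_{n+1}$ and, for every interval $I_n\in\mathcal I_n$, the set $A_n\cap I_n$ is the union of exactly $k$ intervals of $\mathcal I_{n+1}$. Then for Lebesgue almost every $s\in[0,1]$, $\lim_{n\to\infty}\frac1n\#\{0\le j\le n-1: s\in A_j\}=k\alpha>1-\varepsilon$. -/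
/-!
Inside every interval of `𝓘ₙ` the set `Aₙ` has measure `kα` times its length, so `A_q` has
density `kα` in any subinterval of `[0, 1]` up to an error `2σα^q`, and `|Leb Aₙ - kα| ≤ σαⁿ`.
As `Aₙ` is a union of intervals of `𝓘ₙ₊₁`, summing over them gives the correlation bound
`|Leb (Aₙ ∩ A_q) - Leb Aₙ * Leb A_q| ≤ (2 + σ) α^(q-n-1)`. Summable correlations make the
variance of `∑_{j<n} 1_{A_j}` grow linearly, so along the squares `n = N²` the second moments of
the normalised deviations are summable and the deviations tend to zero almost surely; bounded
increments carry this to all `n`, and Cesàro averaging of `Leb Aⱼ → kα` identifies the limit.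
-/

open MeasureTheory Filter

/-- The `i`-th interval of the partition `𝓘ₙ` of `[0, dₙσαⁿ]` into intervals of
length `σαⁿ`. -/
def partInt (σ α : ℝ) (n i : ℕ) : Set ℝ :=
  Set.Ico ((i : ℝ) * (σ * α ^ n)) (((i : ℝ) + 1) * (σ * α ^ n))

open Topology

section WeakSLLN

open Finset ProbabilityTheory
open scoped ENNReal

lemma ncard_setOf_lt_and_mem_eq_sum_indicator {Ω : Type*} (A : ℕ → Set Ω) (ω : Ω) (n : ℕ) :
    ({j | j < n ∧ ω ∈ A j}.ncard : ℝ) = ∑ j ∈ range n, (A j).indicator 1 ω := by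
  classical
  have : {j | j < n ∧ ω ∈ A j} = ↑((range n).filter fun j => ω ∈ A j) := by ext; simp
  rw [this, Set.ncard_coe_finset, card_filter]
  push_cast
  exact sum_congr rfl fun j _ => by simp [Set.indicator_apply]

lemma tendsto_div_of_tendsto_div_sq {S : ℕ → ℝ} {c : ℝ} (hstep : ∀ n, |S (n + 1) - S n| ≤ c)
    (h : Tendsto (fun N : ℕ => S (N ^ 2) / (N : ℝ) ^ 2) atTop (𝓝 0)) :
    Tendsto (fun n : ℕ => S n / n) atTop (𝓝 0) := by
  have hlip : ∀ m n, m ≤ n → |S n - S m| ≤ c * (n - m) := by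
    intro m n hmn
    induction n, hmn using Nat.le_induction with
    | base => simp
    | succ n _ ih =>
      calc |S (n + 1) - S m| ≤ |S (n + 1) - S n| + |S n - S m| := abs_sub_le _ _ _
        _ ≤ c * (↑(n + 1) - m) := by push_cast; linarith [hstep n]
  have hc : 0 ≤ c := (abs_nonneg _).trans (hstep 0)
  -- compare `n` with the largest square `N ^ 2 ≤ n`, which is within `2 * N` of `n`
  have hbound : ∀ n, 1 ≤ n →
      |S n / n| ≤ |S (Nat.sqrt n ^ 2) / (Nat.sqrt n : ℝ) ^ 2| + 2 * c / Nat.sqrt n := by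
    intro n hn
    set N := Nat.sqrt n
    have hN : (0 : ℝ) < N := by exact_mod_cast Nat.le_sqrt.2 hn
    have hle : N ^ 2 ≤ n := by rw [sq]; exact Nat.sqrt_le n
    have hlt : n ≤ N ^ 2 + 2 * N := by have := Nat.lt_succ_sqrt n; nlinarith
    have hler : (N : ℝ) ^ 2 ≤ n := by exact_mod_cast hle
    have hltr : (n : ℝ) ≤ (N : ℝ) ^ 2 + 2 * N := by exact_mod_cast hlt
    have hdiff : |S n - S (N ^ 2)| ≤ c * (2 * N) := by
      refine (hlip _ _ hle).trans (mul_le_mul_of_nonneg_left ?_ hc)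
      push_cast; linarith
    calc |S n / n| = |S n| / n := by rw [abs_div, Nat.abs_cast]
      _ ≤ |S n| / (N : ℝ) ^ 2 := div_le_div_of_nonneg_left (abs_nonneg _) (by positivity) hler
      _ ≤ (|S (N ^ 2)| + c * (2 * N)) / (N : ℝ) ^ 2 := by
          gcongr; linarith [abs_sub_abs_le_abs_sub (S n) (S (N ^ 2))]
      _ = |S (N ^ 2) / (N : ℝ) ^ 2| + 2 * c / N := by
          rw [abs_div, abs_of_pos (by positivity : (0 : ℝ) < (N : ℝ) ^ 2)]
          field_simp
  have hsqrt : Tendsto Nat.sqrt atTop atTop :=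
    tendsto_atTop_atTop.2 fun b => ⟨b * b, fun n hn => Nat.le_sqrt.2 hn⟩
  have hlim : Tendsto (fun N : ℕ => |S (N ^ 2) / (N : ℝ) ^ 2| + 2 * c / N) atTop (𝓝 0) := by
    simpa using h.abs.add (tendsto_const_div_atTop_nhds_zero_nat (2 * c))
  refine squeeze_zero_norm' ?_ (hlim.comp hsqrt)
  filter_upwards [eventually_ge_atTop 1] with n hn
  exact hbound n hn

variable {Ω : Type*} [MeasurableSpace Ω] {μ : Measure Ω}

lemma ae_tendsto_zero_of_summable_integral_sq {Z : ℕ → Ω → ℝ} (hZ : ∀ N, MemLp (Z N) 2 μ)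
    (hsum : Summable fun N => ∫ ω, Z N ω ^ 2 ∂μ) :
    ∀ᵐ ω ∂μ, Tendsto (fun N => Z N ω) atTop (𝓝 0) := by
  have hmeas N : AEMeasurable (fun ω => ENNReal.ofReal (Z N ω ^ 2)) μ :=
    ((hZ N).aestronglyMeasurable.aemeasurable.pow_const 2).ennreal_ofReal
  have hlint : ∫⁻ ω, ∑' N, ENNReal.ofReal (Z N ω ^ 2) ∂μ ≠ ∞ := by
    rw [lintegral_tsum hmeas]
    simp_rw [← ofReal_integral_eq_lintegral_ofReal (hZ _).integrable_sq
      (ae_of_all _ fun _ => sq_nonneg _)]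
    rw [← ENNReal.ofReal_tsum_of_nonneg (fun N => integral_nonneg fun _ => sq_nonneg _) hsum]
    exact ENNReal.ofReal_ne_top
  filter_upwards [ae_lt_top' (AEMeasurable.tsum hmeas) hlint] with ω hω
  have hsq : Summable fun N => Z N ω ^ 2 := by
    simpa [ENNReal.toReal_ofReal (sq_nonneg _)] using ENNReal.summable_toReal hω.ne
  have habs := hsq.tendsto_atTop_zero.sqrt
  simp only [Real.sqrt_sq_eq_abs, Real.sqrt_zero] at habs
  exact (tendsto_zero_iff_abs_tendsto_zero _).2 habs

lemma ae_tendsto_sum_sub_integral_div_of_variance_le [IsProbabilityMeasure μ] {X : ℕ → Ω → ℝ}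
    {c K : ℝ} (hX : ∀ j, AEStronglyMeasurable (X j) μ) (hbdd : ∀ j ω, |X j ω| ≤ c)
    (hvar : ∀ n, Var[∑ j ∈ range n, X j; μ] ≤ K * n) :
    ∀ᵐ ω ∂μ, Tendsto (fun n => (∑ j ∈ range n, (X j ω - μ[X j])) / n) atTop (𝓝 0) := by
  have hL2 j : MemLp (X j) 2 μ := MemLp.of_bound (hX j) c (ae_of_all _ (hbdd j))
  set S : ℕ → Ω → ℝ := fun n ω => ∑ j ∈ range n, (X j ω - μ[X j])
  have hS n : S n = fun ω => (∑ j ∈ range n, X j) ω - μ[∑ j ∈ range n, X j] := by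
    ext ω
    simp [S, integral_finsetSum _ fun j _ => (hL2 j).integrable one_le_two]
  have hSL2 n : MemLp (S n) 2 μ := by
    rw [hS]; exact (memLp_finsetSum' _ fun j _ => hL2 j).sub (memLp_const _)
  have hint n : ∫ ω, S n ω ^ 2 ∂μ ≤ K * n := by
    rw [hS, ← variance_eq_integral (memLp_finsetSum' _ fun j _ => hL2 j).aemeasurable]
    exact hvar n
  have hsq : ∀ᵐ ω ∂μ, Tendsto (fun N : ℕ => S (N ^ 2) ω / (N : ℝ) ^ 2) atTop (𝓝 0) := by
    refine ae_tendsto_zero_of_summable_integral_sq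
      (fun N => by simpa only [div_eq_mul_inv] using (hSL2 _).mul_const _) ?_
    refine Summable.of_nonneg_of_le (fun N => integral_nonneg fun _ => sq_nonneg _) (fun N => ?_)
      ((Real.summable_one_div_nat_pow.2 one_lt_two).mul_left K)
    simp_rw [div_pow, integral_div]
    rcases N.eq_zero_or_pos with rfl | hN
    · simp
    · rw [div_le_iff₀ (by positivity)]
      refine (hint (N ^ 2)).trans_eq ?_
      have : (N : ℝ) ≠ 0 := by positivity
      push_cast
      field_simp
  filter_upwards [hsq] with ω hω
  refine tendsto_div_of_tendsto_div_sq (c := 2 * c) (fun n => ?_) hω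
  have hmean : |μ[X n]| ≤ c := by
    simpa using norm_integral_le_of_norm_le_const (μ := μ) (f := X n) (ae_of_all _ (hbdd n))
  simp only [sum_range_succ, add_sub_cancel_left]
  linarith [abs_sub (X n ω) (μ[X n]), hbdd n ω]

lemma sum_range_pow_sub_le {a : ℝ} (ha0 : 0 ≤ a) (ha1 : a < 1) (n : ℕ) :
    ∑ i ∈ range n, a ^ (n - i) ≤ 1 / (1 - a) := by
  rw [← sum_range_reflect]
  calc ∑ i ∈ range n, a ^ (n - (n - 1 - i)) ≤ ∑ i ∈ range n, a ^ i := by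
        refine sum_le_sum fun i hi => pow_le_pow_of_le_one ha0 ha1.le ?_
        have := mem_range.1 hi; omega
    _ ≤ 1 / (1 - a) := by
        have := geom_sum_Ico_le_of_lt_one (m := 0) (n := n) ha0 ha1
        rwa [← range_eq_Ico, pow_zero] at this

lemma variance_sum_range_le_of_abs_covariance_le [IsFiniteMeasure μ] {X : ℕ → Ω → ℝ}
    (hX : ∀ j, MemLp (X j) 2 μ) {C a : ℝ} (ha0 : 0 ≤ a) (ha1 : a < 1)
    (hcov : ∀ i j, i ≤ j → |cov[X i, X j; μ]| ≤ C * a ^ (j - i)) (n : ℕ) :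
    Var[∑ j ∈ range n, X j; μ] ≤ 3 * C / (1 - a) * n := by
  have hC : 0 ≤ C := by simpa using (abs_nonneg _).trans (hcov 0 0 le_rfl)
  have h1a : 0 < 1 - a := by linarith
  induction n with
  | zero => simp
  | succ n ih =>
    have hcross : cov[∑ i ∈ range n, X i, X n; μ] ≤ C / (1 - a) := by
      rw [covariance_sum_left' (fun i _ => hX i) (hX n)]
      calc ∑ i ∈ range n, cov[X i, X n; μ] ≤ ∑ i ∈ range n, C * a ^ (n - i) :=
            sum_le_sum fun i hi => (le_abs_self _).trans (hcov i n (mem_range.1 hi).le)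
        _ ≤ C * (1 / (1 - a)) := by
            rw [← mul_sum]; exact mul_le_mul_of_nonneg_left (sum_range_pow_sub_le ha0 ha1 n) hC
        _ = C / (1 - a) := by ring
    have hdiag : Var[X n; μ] ≤ C := by
      rw [← covariance_self (hX n).aemeasurable]
      simpa using (le_abs_self _).trans (hcov n n le_rfl)
    have hC' : C ≤ C / (1 - a) := le_div_self hC h1a (by linarith)
    rw [sum_range_succ, variance_add (memLp_finsetSum' _ fun i _ => hX i) (hX n)]
    calc _ ≤ 3 * C / (1 - a) * n + 2 * (C / (1 - a)) + C / (1 - a) := by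
          gcongr; exact hdiag.trans hC'
      _ = 3 * C / (1 - a) * ↑(n + 1) := by push_cast; ring

lemma covariance_indicator_one [IsProbabilityMeasure μ] {s t : Set Ω} (hs : MeasurableSet s)
    (ht : MeasurableSet t) :
    cov[s.indicator 1, t.indicator 1; μ] = μ.real (s ∩ t) - μ.real s * μ.real t := by
  have hL2 {u : Set Ω} (hu : MeasurableSet u) : MemLp (u.indicator (1 : Ω → ℝ)) 2 μ :=
    memLp_indicator_const 2 hu 1 (Or.inr (measure_ne_top μ u))
  rw [covariance_eq_sub (hL2 hs) (hL2 ht), ← Set.inter_indicator_one,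
    integral_indicator_one (hs.inter ht), integral_indicator_one hs, integral_indicator_one ht]

theorem ae_tendsto_ncard_div_of_abs_measureReal_inter_sub_le [IsProbabilityMeasure μ]
    {A : ℕ → Set Ω} (hA : ∀ n, MeasurableSet (A n)) {p C a : ℝ} (ha0 : 0 ≤ a) (ha1 : a < 1)
    (hcorr : ∀ i j, i ≤ j →
      |μ.real (A i ∩ A j) - μ.real (A i) * μ.real (A j)| ≤ C * a ^ (j - i))
    (hp : Tendsto (fun n => μ.real (A n)) atTop (𝓝 p)) :
    ∀ᵐ ω ∂μ, Tendsto (fun n : ℕ => ({j | j < n ∧ ω ∈ A j}.ncard : ℝ) / n) atTop (𝓝 p) := by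
  set X : ℕ → Ω → ℝ := fun j => (A j).indicator 1
  have hL2 j : MemLp (X j) 2 μ := memLp_indicator_const 2 (hA j) 1 (Or.inr (measure_ne_top μ _))
  have hmean j : μ[X j] = μ.real (A j) := integral_indicator_one (hA j)
  have hbdd j ω : |X j ω| ≤ 1 := by
    by_cases h : ω ∈ A j <;> simp [X, h]
  have hslln := ae_tendsto_sum_sub_integral_div_of_variance_le
    (fun j => (hL2 j).aestronglyMeasurable) hbdd
    (variance_sum_range_le_of_abs_covariance_le hL2 ha0 ha1 fun i j hij => by
      rw [covariance_indicator_one (hA i) (hA j)]; exact hcorr i j hij)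
  filter_upwards [hslln] with ω hω
  have hsplit n : ({j | j < n ∧ ω ∈ A j}.ncard : ℝ) / n
      = (∑ j ∈ range n, (X j ω - μ[X j])) / n + (n⁻¹ : ℝ) * ∑ j ∈ range n, μ.real (A j) := by
    simp only [ncard_setOf_lt_and_mem_eq_sum_indicator, sum_sub_distrib, hmean]
    ring
  simpa only [hsplit, zero_add] using hω.add hp.cesaro

end WeakSLLN

section IntervalDensity

open Set

lemma measureReal_inter_Ico_add {B : Set ℝ} (hB : MeasurableSet B) {a b c : ℝ} (hab : a ≤ b)
    (hbc : b ≤ c) :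
    volume.real (B ∩ Ico a b) + volume.real (B ∩ Ico b c) = volume.real (B ∩ Ico a c) := by
  rw [← Ico_union_Ico_eq_Ico hab hbc, inter_union_distrib_left,
    measureReal_union
      (disjoint_of_subset inter_subset_right inter_subset_right Ico_disjoint_Ico_same)
      (hB.inter measurableSet_Ico) (measure_inter_lt_top_of_right_ne_top measure_Ico_lt_top.ne).ne
      (measure_inter_lt_top_of_right_ne_top measure_Ico_lt_top.ne).ne]

variable {B : Set ℝ} {h ρ : ℝ} {d : ℕ}

lemma abs_measureReal_inter_Ico_zero_sub_le (hB : MeasurableSet B) (hh : 0 < h) (hρ0 : 0 ≤ ρ)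
    (hρ1 : ρ ≤ 1) (hcell : ∀ j < d, volume.real (B ∩ Ico (j * h) ((j + 1) * h)) = ρ * h)
    {x : ℝ} (hx0 : 0 ≤ x) (hx : x ≤ (d + 1) * h) :
    |volume.real (B ∩ Ico 0 x) - ρ * x| ≤ h := by
  have hgrid : ∀ j ≤ d, volume.real (B ∩ Ico 0 (j * h)) = ρ * (j * h) := by
    intro j hj
    induction j with
    | zero => simp
    | succ j ih =>
      rw [← measureReal_inter_Ico_add hB (b := j * h) (by positivity) (by push_cast; nlinarith),
        ih (by omega), Nat.cast_succ, hcell j hj]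
      ring
  set j := min ⌊x / h⌋₊ d
  have hjx : j * h ≤ x :=
    (le_div_iff₀ hh).1 ((Nat.cast_le.2 (min_le_left _ _)).trans (Nat.floor_le (by positivity)))
  have hxj : x ≤ (j + 1) * h := by
    rcases min_choice ⌊x / h⌋₊ d with hj | hj <;> simp only [j, hj]
    · exact ((div_lt_iff₀ hh).1 (Nat.lt_floor_add_one _)).le
    · exact hx
  have hrem0 : 0 ≤ volume.real (B ∩ Ico (j * h) x) := measureReal_nonneg
  have hrem1 : volume.real (B ∩ Ico (j * h) x) ≤ x - j * h :=
    (measureReal_mono inter_subset_right measure_Ico_lt_top.ne).trans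
      (Real.volume_real_Ico_of_le hjx).le
  have hρx : ρ * (x - j * h) ≤ x - j * h := mul_le_of_le_one_left (by linarith) hρ1
  have hρx0 : 0 ≤ ρ * (x - j * h) := mul_nonneg hρ0 (by linarith)
  rw [← measureReal_inter_Ico_add hB (by positivity) hjx, hgrid j (min_le_right _ _), abs_le]
  constructor <;> nlinarith

lemma abs_measureReal_inter_Ico_sub_le (hB : MeasurableSet B) (hh : 0 < h) (hρ0 : 0 ≤ ρ)
    (hρ1 : ρ ≤ 1) (hcell : ∀ j < d, volume.real (B ∩ Ico (j * h) ((j + 1) * h)) = ρ * h)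
    {a b : ℝ} (ha : 0 ≤ a) (hab : a ≤ b) (hb : b ≤ (d + 1) * h) :
    |volume.real (B ∩ Ico a b) - ρ * (b - a)| ≤ 2 * h := by
  have hupto_a := abs_measureReal_inter_Ico_zero_sub_le hB hh hρ0 hρ1 hcell ha (hab.trans hb)
  have hupto_b := abs_measureReal_inter_Ico_zero_sub_le hB hh hρ0 hρ1 hcell (ha.trans hab) hb
  rw [← measureReal_inter_Ico_add hB ha hab] at hupto_b
  rw [abs_le] at hupto_a hupto_b ⊢
  constructor <;> linarith [hupto_a.1, hupto_a.2, hupto_b.1, hupto_b.2]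

end IntervalDensity

section Grid

open Set Function

variable {σ α : ℝ} {n : ℕ}

lemma measurableSet_partInt (i : ℕ) : MeasurableSet (partInt σ α n i) := measurableSet_Ico

lemma measureReal_partInt (hh : 0 ≤ σ * α ^ n) (i : ℕ) :
    volume.real (partInt σ α n i) = σ * α ^ n := by
  rw [partInt, Real.volume_real_Ico_of_le (by nlinarith)]
  ring

lemma pairwise_disjoint_partInt (hh : 0 ≤ σ * α ^ n) : Pairwise (Disjoint on partInt σ α n) := by
  refine (pairwise_disjoint_on _).2 fun i j hij => disjoint_left.2 fun x hi hj => ?_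
  have : ((i : ℝ) + 1) * (σ * α ^ n) ≤ j * (σ * α ^ n) :=
    mul_le_mul_of_nonneg_right (by exact_mod_cast hij) hh
  exact (hi.2.trans_le this).not_ge hj.1

lemma measureReal_biUnion_partInt (hh : 0 ≤ σ * α ^ n) (S : Finset ℕ) :
    volume.real (⋃ i ∈ S, partInt σ α n i) = S.card * (σ * α ^ n) := by
  rw [measureReal_biUnion_finset ((pairwise_disjoint_partInt hh).set_pairwise _)
    (fun i _ => measurableSet_partInt i) (fun _ _ => measure_Ico_lt_top.ne)]
  simp [measureReal_partInt hh]

lemma exists_finset_eq_biUnion_partInt (hh : 0 ≤ σ * α ^ n) {A : Set ℝ} {d : ℕ}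
    (hsub : A ⊆ Ico 0 (d * (σ * α ^ n)))
    (hcells : ∀ j < d, ∃ S : Finset ℕ, A ∩ partInt σ α n j = ⋃ i ∈ S, partInt σ α (n + 1) i) :
    ∃ T : Finset ℕ, A = ⋃ i ∈ T, partInt σ α (n + 1) i := by
  suffices ∀ m ≤ d, ∃ T : Finset ℕ, A ∩ Ico 0 (m * (σ * α ^ n)) = ⋃ i ∈ T, partInt σ α (n + 1) i by
    simpa [inter_eq_left.2 hsub] using this d le_rfl
  intro m hm
  induction m with
  | zero => exact ⟨∅, by simp⟩
  | succ m ih =>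
    obtain ⟨T, hT⟩ := ih (by omega)
    obtain ⟨S, hS⟩ := hcells m (by omega)
    refine ⟨T ∪ S, ?_⟩
    rw [Finset.set_biUnion_union, ← hT, ← hS, ← inter_union_distrib_left, partInt,
      Ico_union_Ico_eq_Ico (by positivity) (by nlinarith), Nat.cast_succ]

lemma measureReal_inter_partInt {A : Set ℝ} {k j : ℕ}
    (hh : 0 ≤ σ * α ^ (n + 1)) {S : Finset ℕ} (hS : S.card = k)
    (hAS : A ∩ partInt σ α n j = ⋃ i ∈ S, partInt σ α (n + 1) i) :
    volume.real (A ∩ partInt σ α n j) = k * α * (σ * α ^ n) := by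
  rw [hAS, measureReal_biUnion_partInt hh, hS, pow_succ]
  ring

lemma abs_measureReal_biUnion_partInt_inter_sub_le (hh : 0 < σ * α ^ n) {B : Set ℝ}
    (hB : MeasurableSet B) {ρ e L : ℝ}
    (hdens : ∀ a b, 0 ≤ a → a ≤ b → b ≤ L → |volume.real (B ∩ Ico a b) - ρ * (b - a)| ≤ e)
    {T : Finset ℕ} (hT : ⋃ i ∈ T, partInt σ α n i ⊆ Ico 0 L) :
    |volume.real ((⋃ i ∈ T, partInt σ α n i) ∩ B)
      - ρ * volume.real (⋃ i ∈ T, partInt σ α n i)| ≤ T.card * e := by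
  have hcell : ∀ i ∈ T, |volume.real (partInt σ α n i ∩ B) - ρ * (σ * α ^ n)| ≤ e := by
    intro i hi
    have hiL := (subset_biUnion_of_mem (u := partInt σ α n) hi).trans hT
    rw [partInt, Ico_subset_Ico_iff (by nlinarith)] at hiL
    have := hdens _ _ hiL.1 (by nlinarith) hiL.2
    rwa [inter_comm, show ((i : ℝ) + 1) * (σ * α ^ n) - i * (σ * α ^ n) = σ * α ^ n by ring]
      at this
  rw [iUnion₂_inter, measureReal_biUnion_finset
      (fun i _ j _ hij => (pairwise_disjoint_partInt hh.le hij).mono inter_subset_left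
        inter_subset_left)
      (fun i _ => (measurableSet_partInt i).inter hB)
      (fun _ _ => (measure_inter_lt_top_of_left_ne_top measure_Ico_lt_top.ne).ne),
    measureReal_biUnion_partInt hh.le, mul_left_comm, ← nsmul_eq_mul, ← Finset.sum_const,
    ← Finset.sum_sub_distrib]
  exact (Finset.abs_sum_le_sum_abs _ _).trans ((Finset.sum_le_sum hcell).trans_eq (by simp))

end Grid

open Set

lemma Nat.floor_one_div_mul_le {h : ℝ} (hh : 0 < h) : ⌊1 / h⌋₊ * h ≤ 1 :=
  (le_div_iff₀ hh).1 (Nat.floor_le (by positivity))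

lemma Nat.one_le_floor_one_div_add_one_mul {h : ℝ} (hh : 0 < h) : 1 ≤ (⌊1 / h⌋₊ + 1) * h :=
  ((div_le_iff₀ hh).1 (Nat.lt_floor_add_one _).le)

structure IsRegularSelection (σ α : ℝ) (k : ℕ) (d : ℕ → ℕ) (A : ℕ → Set ℝ) : Prop where
  d_eq : ∀ n, d n = ⌊1 / (σ * α ^ n)⌋₊
  subset : ∀ n, A n ⊆ Ico 0 (d n * (σ * α ^ n))
  inter_partInt : ∀ n, ∀ j < d n,
    ∃ S : Finset ℕ, S.card = k ∧ A n ∩ partInt σ α n j = ⋃ i ∈ S, partInt σ α (n + 1) i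

namespace IsRegularSelection

variable {σ α : ℝ} {n k : ℕ} {d : ℕ → ℕ} {A : ℕ → Set ℝ}

theorem mul_le_one (hA : IsRegularSelection σ α k d A) (hh : 0 < σ * α ^ n) :
    d n * (σ * α ^ n) ≤ 1 := by
  rw [hA.d_eq n]; exact Nat.floor_one_div_mul_le hh

theorem one_le_add_one_mul (hA : IsRegularSelection σ α k d A) (hh : 0 < σ * α ^ n) :
    1 ≤ (d n + 1) * (σ * α ^ n) := by
  rw [hA.d_eq n]; exact Nat.one_le_floor_one_div_add_one_mul hh

theorem subset_Ico_zero_one (hA : IsRegularSelection σ α k d A) (hh : 0 < σ * α ^ n) :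
    A n ⊆ Ico 0 1 :=
  (hA.subset n).trans (Ico_subset_Ico_right (hA.mul_le_one hh))

theorem exists_eq_biUnion_partInt (hA : IsRegularSelection σ α k d A) (hh : 0 ≤ σ * α ^ n) :
    ∃ T : Finset ℕ, A n = ⋃ i ∈ T, partInt σ α (n + 1) i :=
  exists_finset_eq_biUnion_partInt hh (hA.subset n) fun j hj =>
    (hA.inter_partInt n j hj).imp fun _ => And.right

theorem measurableSet (hA : IsRegularSelection σ α k d A) (hh : 0 ≤ σ * α ^ n) :
    MeasurableSet (A n) := by
  obtain ⟨T, hT⟩ := hA.exists_eq_biUnion_partInt hh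
  rw [hT]
  exact T.measurableSet_biUnion fun i _ => measurableSet_partInt i

theorem measureReal_inter_partInt_of_lt (hA : IsRegularSelection σ α k d A) (hσ : 0 < σ)
    (hα : 0 < α) {j : ℕ} (hj : j < d n) :
    volume.real (A n ∩ partInt σ α n j) = k * α * (σ * α ^ n) := by
  obtain ⟨S, hS, hAS⟩ := hA.inter_partInt n j hj
  exact measureReal_inter_partInt (by positivity) hS hAS

theorem abs_measureReal_inter_Ico_sub_le (hA : IsRegularSelection σ α k d A) (hσ : 0 < σ)
    (hα : 0 < α) (hkα : k * α ≤ 1) (n : ℕ) {a b : ℝ} (ha : 0 ≤ a) (hab : a ≤ b) (hb : b ≤ 1) :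
    |volume.real (A n ∩ Ico a b) - k * α * (b - a)| ≤ 2 * (σ * α ^ n) :=
  _root_.abs_measureReal_inter_Ico_sub_le (hA.measurableSet (by positivity)) (by positivity)
    (by positivity) hkα (fun _ hj => hA.measureReal_inter_partInt_of_lt hσ hα hj) ha hab
    (hb.trans (hA.one_le_add_one_mul (by positivity)))

theorem abs_measureReal_sub_le (hA : IsRegularSelection σ α k d A) (hσ : 0 < σ) (hα : 0 < α)
    (hkα : k * α ≤ 1) (n : ℕ) : |volume.real (A n) - k * α| ≤ σ * α ^ n := by
  have hh : 0 < σ * α ^ n := by positivity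
  have := abs_measureReal_inter_Ico_zero_sub_le (hA.measurableSet hh.le) hh (by positivity) hkα
    (fun _ hj => hA.measureReal_inter_partInt_of_lt hσ hα hj) zero_le_one
    (hA.one_le_add_one_mul hh)
  rwa [inter_eq_left.2 (hA.subset_Ico_zero_one hh), mul_one] at this

theorem tendsto_measureReal (hA : IsRegularSelection σ α k d A) (hσ : 0 < σ) (hα0 : 0 < α)
    (hα1 : α < 1) (hkα : k * α ≤ 1) :
    Tendsto (fun n => volume.real (A n)) atTop (𝓝 (k * α)) := by
  have hlim : Tendsto (fun n => σ * α ^ n) atTop (𝓝 0) := by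
    simpa using (tendsto_pow_atTop_nhds_zero_of_lt_one hα0.le hα1).const_mul σ
  exact tendsto_iff_norm_sub_tendsto_zero.2 <|
    squeeze_zero (fun _ => norm_nonneg _) (hA.abs_measureReal_sub_le hσ hα0 hkα) hlim

theorem abs_measureReal_inter_sub_mul_le (hA : IsRegularSelection σ α k d A) (hσ : 0 < σ)
    (hα0 : 0 < α) (hα1 : α ≤ 1) (hkα : k * α ≤ 1) {n q : ℕ} (hnq : n ≤ q) :
    |volume.real (A n ∩ A q) - volume.real (A n) * volume.real (A q)|
      ≤ (2 + σ) / α * α ^ (q - n) := by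
  have hv0 : 0 ≤ volume.real (A n) := measureReal_nonneg
  have hv1 : volume.real (A n) ≤ 1 :=
    (measureReal_mono (hA.subset_Ico_zero_one (by positivity)) measure_Ico_lt_top.ne).trans
      (by simp)
  rcases hnq.eq_or_lt with rfl | hlt
  · have hC : 1 ≤ (2 + σ) / α := by rw [le_div_iff₀ hα0]; linarith
    rw [inter_self, Nat.sub_self, pow_zero, mul_one, abs_le]
    constructor <;> nlinarith
  obtain ⟨l, rfl⟩ : ∃ l, q = n + 1 + l := ⟨q - n - 1, by omega⟩
  obtain ⟨T, hT⟩ := hA.exists_eq_biUnion_partInt (n := n) (by positivity)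
  have hvol : volume.real (A n) = T.card * (σ * α ^ (n + 1)) := by
    rw [hT, measureReal_biUnion_partInt (by positivity)]
  -- inside each interval of `𝓘ₙ₊₁` making up `Aₙ`, the set `A_q` has density `kα` up to `2σα^q`
  have hloc : |volume.real (A n ∩ A (n + 1 + l)) - k * α * volume.real (A n)|
      ≤ T.card * (2 * (σ * α ^ (n + 1 + l))) := by
    have hsub := hA.subset_Ico_zero_one (n := n) (by positivity)
    rw [hT] at hsub ⊢
    exact abs_measureReal_biUnion_partInt_inter_sub_le (by positivity)
      (hA.measurableSet (by positivity))
      (fun a b ha hab hb => hA.abs_measureReal_inter_Ico_sub_le hσ hα0 hkα _ ha hab hb) hsub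
  have hglob := hA.abs_measureReal_sub_le hσ hα0 hkα (n + 1 + l)
  have hαl : α ^ (n + 1 + l) ≤ α ^ l := pow_le_pow_of_le_one hα0.le hα1 (by omega)
  calc |volume.real (A n ∩ A (n + 1 + l)) - volume.real (A n) * volume.real (A (n + 1 + l))|
      ≤ |volume.real (A n ∩ A (n + 1 + l)) - k * α * volume.real (A n)|
        + volume.real (A n) * |volume.real (A (n + 1 + l)) - k * α| := by
        rw [← abs_of_nonneg hv0, ← abs_mul, abs_of_nonneg hv0]
        exact (abs_sub_le _ _ _).trans_eq (by congr 1; rw [abs_sub_comm]; ring_nf)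
    _ ≤ 2 * volume.real (A n) * α ^ l + 1 * (σ * α ^ l) := by
        have hcard : T.card * (2 * (σ * α ^ (n + 1 + l))) = 2 * volume.real (A n) * α ^ l := by
          rw [hvol, pow_add]; ring
        gcongr
        · exact hloc.trans_eq hcard
        · exact hglob.trans (by gcongr)
    _ ≤ (2 + σ) / α * α ^ (n + 1 + l - n) := by
        rw [show n + 1 + l - n = l + 1 by omega, pow_succ, div_mul_eq_mul_div,
          mul_div_assoc, mul_div_cancel_right₀ _ hα0.ne']
        nlinarith [pow_nonneg hα0.le l]

end IsRegularSelection

theorem stmt_17_general (α σ : ℝ) (hα : α ∈ Set.Ioo (0 : ℝ) 1) (hσ : σ ∈ Set.Ioo (0 : ℝ) 1)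
    (k : ℕ) (hk1 : (k : ℝ) * α < 1)
    (d : ℕ → ℕ) (hd : ∀ n, d n = Nat.floor (1 / (σ * α ^ n)))
    (A : ℕ → Set ℝ)
    (hA_sub : ∀ n, A n ⊆ Set.Ico (0 : ℝ) ((d n : ℝ) * (σ * α ^ n)))
    (hA_struct : ∀ n : ℕ, ∀ j : ℕ, j < d n →
      ∃ S : Finset ℕ, S.card = k ∧ (∀ i ∈ S, partInt σ α (n + 1) i ⊆ partInt σ α n j) ∧
        A n ∩ partInt σ α n j = ⋃ i ∈ S, partInt σ α (n + 1) i) :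
    ∀ᵐ s ∂(volume.restrict (Set.Icc (0 : ℝ) 1)),
      Tendsto (fun n : ℕ => (Set.ncard {j : ℕ | j < n ∧ s ∈ A j} : ℝ) / n) atTop
        (nhds ((k : ℝ) * α)) := by
  obtain ⟨hα0, hα1⟩ := hα
  obtain ⟨hσ0, -⟩ := hσ
  have hA : IsRegularSelection σ α k d A :=
    ⟨hd, hA_sub, fun n j hj => (hA_struct n j hj).imp fun _ hS => ⟨hS.1, hS.2.2⟩⟩
  have hA01 n : A n ⊆ Icc 0 1 :=
    (hA.subset_Ico_zero_one (by positivity)).trans Ico_subset_Icc_self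
  set μ := volume.restrict (Icc (0 : ℝ) 1)
  have : IsProbabilityMeasure μ := ⟨by simp [μ]⟩
  have hμ (s : Set ℝ) (hs : s ⊆ Icc 0 1) : μ.real s = volume.real s := by
    simp only [μ, measureReal_def, Measure.restrict_eq_self _ hs]
  refine ae_tendsto_ncard_div_of_abs_measureReal_inter_sub_le
    (C := (2 + σ) / α) (fun n => hA.measurableSet (by positivity)) hα0.le hα1
    (fun i j hij => ?_) ?_
  · rw [hμ _ (inter_subset_left.trans (hA01 i)), hμ _ (hA01 i), hμ _ (hA01 j)]
    exact hA.abs_measureReal_inter_sub_mul_le hσ0 hα0 hα1.le hk1.le hij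
  · simpa only [hμ _ (hA01 _)] using hA.tendsto_measureReal hσ0 hα0 hα1 hk1.le

/-- Fix `0 < α, σ < 1`, `ε > 0` and `k ∈ ℕ` with `1-ε < kα < 1`.
Let `Aₙ ⊆ [0,1]` be sets such that `Aₙ` is contained in `[0, dₙσαⁿ]` and, within each
interval of `𝓘ₙ`, `Aₙ` is the union of exactly `k` intervals of `𝓘ₙ₊₁`. Then for
Lebesgue-a.e. `s ∈ [0,1]`, the frequency `(1/n)·#{0 ≤ j ≤ n-1 : s ∈ A_j}` tends to
`kα > 1-ε`. -/
theorem stmt_17 (α σ ε : ℝ) (hα : α ∈ Set.Ioo (0 : ℝ) 1) (hσ : σ ∈ Set.Ioo (0 : ℝ) 1)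
    (hε : 0 < ε) (k : ℕ) (hk : 1 - ε < (k : ℝ) * α) (hk1 : (k : ℝ) * α < 1)
    (d : ℕ → ℕ) (hd : ∀ n, d n = Nat.floor (1 / (σ * α ^ n)))
    (A : ℕ → Set ℝ)
    (hA_sub : ∀ n, A n ⊆ Set.Ico (0 : ℝ) ((d n : ℝ) * (σ * α ^ n)))
    (hA_struct : ∀ n : ℕ, ∀ j : ℕ, j < d n →
      ∃ S : Finset ℕ, S.card = k ∧ (∀ i ∈ S, partInt σ α (n + 1) i ⊆ partInt σ α n j) ∧
        A n ∩ partInt σ α n j = ⋃ i ∈ S, partInt σ α (n + 1) i) :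
    ∀ᵐ s ∂(volume.restrict (Set.Icc (0 : ℝ) 1)),
      Tendsto (fun n : ℕ => (Set.ncard {j : ℕ | j < n ∧ s ∈ A j} : ℝ) / n) atTop
        (nhds ((k : ℝ) * α)) :=
  stmt_17_general α σ hα hσ k hk1 d hd A hA_sub hA_struct
end
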